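/- arXiv:2511.06164 — 14 statements merged into one kernel-verified Lean document; each statement's English description precedes it below -/
import Mathlib

section
/- Let Θ = (I − B)(I − B)ᵀ and let τ = 1 + max_i Σ_j (B i j)². Then the condition number of Θ is at least τ; that is, λ_max(Θ) ≥ τ · λ_min(Θ), where λ_max(Θ) and λ_min(Θ) denote the largest and smallest eigenvalues of the symmetric positive definite matrix Θ. (Since Σ = Θ⁻¹, the same lower bound τ holds for the condition number of the covariance matrix Σ.) -/
open Matrix BigOperators

lemma diag_le_iSup_eigenvalues {n : Type*} [Fintype n] [DecidableEq n] [Nonempty n]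
    {A : Matrix n n ℝ} (hA : A.IsHermitian) (i : n) :
    A i i ≤ ⨆ j, hA.eigenvalues j := by
  set U : Matrix n n ℝ := (hA.eigenvectorUnitary : Matrix n n ℝ) with hU
  have hrow : ∑ k, (U i k) ^ 2 = 1 := by
    have h1 : U * star U = 1 := (Matrix.mem_unitaryGroup_iff).mp hA.eigenvectorUnitary.2
    have := congrFun (congrFun h1 i) i
    simp [Matrix.mul_apply, Matrix.one_apply, sq] at this ⊢
    simpa [Matrix.star_apply] using this
  have hdiag : A i i = ∑ k, hA.eigenvalues k * (U i k) ^ 2 := by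
    conv_lhs => rw [hA.spectral_theorem]
    simp [Matrix.mul_apply, Matrix.diagonal_apply, Matrix.star_apply, Finset.sum_ite_eq,
      Matrix.IsHermitian.eigenvectorUnitary_apply, sq, mul_comm, mul_assoc, mul_left_comm]
    simp [hU, Matrix.IsHermitian.eigenvectorUnitary_apply]
  rw [hdiag]
  calc ∑ k, hA.eigenvalues k * (U i k) ^ 2
      ≤ ∑ k, (⨆ j, hA.eigenvalues j) * (U i k) ^ 2 := by
        refine Finset.sum_le_sum fun k _ => ?_
        exact mul_le_mul_of_nonneg_right (le_ciSup (Set.Finite.bddAbove (Set.finite_range _)) k)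
          (sq_nonneg _)
    _ = ⨆ j, hA.eigenvalues j := by rw [← Finset.mul_sum, hrow, mul_one]

/-- For a strictly upper triangular `B`, the precision matrix
`Θ = (I − B)(I − B)ᵀ` has condition number at least `τ = 1 + max_i ∑_j (B i j)²`:
`λ_max(Θ) ≥ τ · λ_min(Θ)`. -/
theorem dag_condition_number_ge_tau (n : ℕ) (hn : 0 < n)
    (B : Matrix (Fin n) (Fin n) ℝ)
    (hB : ∀ i j : Fin n, ¬ i < j → B i j = 0)
    (Θ : Matrix (Fin n) (Fin n) ℝ) (hΘdef : Θ = (1 - B) * (1 - B)ᵀ)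
    (hΘ : Θ.IsHermitian) :
    (1 + ⨆ i : Fin n, ∑ j : Fin n, (B i j) ^ 2) * (⨅ i, hΘ.eigenvalues i)
      ≤ ⨆ i, hΘ.eigenvalues i := by
  haveI : Nonempty (Fin n) := Fin.pos_iff_nonempty.mp hn
  have hBdiag : ∀ i : Fin n, B i i = 0 := fun i => hB i i (lt_irrefl i)
  -- determinant of 1 - B is 1
  have hdet1B : (1 - B).det = 1 := by
    have htri : (1 - B).BlockTriangular id := by
      intro i j hij
      simp only [Matrix.sub_apply, Matrix.one_apply_ne (ne_of_gt hij : i ≠ j),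
        hB i j (not_lt_of_gt hij), sub_zero]
    rw [Matrix.det_of_upperTriangular htri]
    refine Finset.prod_eq_one fun i _ => ?_
    simp [hBdiag i]
  have hdetΘ : Θ.det = 1 := by
    rw [hΘdef, Matrix.det_mul, Matrix.det_transpose, hdet1B, mul_one]
  -- product of eigenvalues is 1
  have hprod : ∏ i, hΘ.eigenvalues i = 1 := by
    have := hΘ.det_eq_prod_eigenvalues
    rw [hdetΘ] at this
    exact_mod_cast this.symm
  -- some eigenvalue is at most 1
  have hex : ∃ i, hΘ.eigenvalues i ≤ 1 := by
    by_contra h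
    push_neg at h
    have : (1 : ℝ) < ∏ i, hΘ.eigenvalues i := by
      calc (1:ℝ) = ∏ _i : Fin n, (1:ℝ) := by simp
        _ < ∏ i, hΘ.eigenvalues i :=
          Finset.prod_lt_prod_of_nonempty (fun i _ => one_pos) (fun i _ => h i)
            Finset.univ_nonempty
    rw [hprod] at this
    exact lt_irrefl _ this
  obtain ⟨i₁, hi₁⟩ := hex
  have hmin_le_one : (⨅ i, hΘ.eigenvalues i) ≤ 1 :=
    le_trans (ciInf_le (Set.Finite.bddBelow (Set.finite_range _)) i₁) hi₁
  -- diagonal entries of Θ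
  have hdiagΘ : ∀ i : Fin n, Θ i i = 1 + ∑ j, (B i j) ^ 2 := by
    intro i
    rw [hΘdef]
    simp only [Matrix.mul_apply, Matrix.transpose_apply, Matrix.sub_apply, Matrix.one_apply]
    have : ∀ j : Fin n, ((if i = j then (1:ℝ) else 0) - B i j) *
        ((if i = j then (1:ℝ) else 0) - B i j)
        = (if i = j then (1:ℝ) else 0) - 2 * (if i = j then (1:ℝ) else 0) * B i j
          + (B i j)^2 := by
      intro j
      by_cases h : i = j <;> simp [h, sq] <;> ring
    rw [Finset.sum_congr rfl fun j _ => this j]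
    rw [Finset.sum_add_distrib, Finset.sum_sub_distrib]
    simp [Finset.sum_ite_eq, hBdiag i, mul_ite]
  -- τ ≤ λ_max
  have hτ_le : (1 + ⨆ i : Fin n, ∑ j : Fin n, (B i j) ^ 2) ≤ ⨆ i, hΘ.eigenvalues i := by
    rw [add_comm]
    rw [← le_sub_iff_add_le]
    refine ciSup_le fun i => ?_
    rw [le_sub_iff_add_le, add_comm, ← hdiagΘ i]
    exact diag_le_iSup_eigenvalues hΘ i
  -- τ ≥ 0
  have hτ_nonneg : (0:ℝ) ≤ 1 + ⨆ i : Fin n, ∑ j : Fin n, (B i j) ^ 2 := by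
    have h0 : (0:ℝ) ≤ ⨆ i : Fin n, ∑ j : Fin n, (B i j) ^ 2 := by
      obtain ⟨i₀⟩ := ‹Nonempty (Fin n)›
      refine le_trans (Finset.sum_nonneg fun j _ => sq_nonneg (B i₀ j))
        (le_ciSup (f := fun i : Fin n => ∑ j : Fin n, (B i j)^2) (Set.Finite.bddAbove (Set.finite_range _)) i₀)
    linarith
  calc (1 + ⨆ i : Fin n, ∑ j : Fin n, (B i j) ^ 2) * (⨅ i, hΘ.eigenvalues i)
      ≤ (1 + ⨆ i : Fin n, ∑ j : Fin n, (B i j) ^ 2) * 1 :=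
        mul_le_mul_of_nonneg_left hmin_le_one hτ_nonneg
    _ = 1 + ⨆ i : Fin n, ∑ j : Fin n, (B i j) ^ 2 := mul_one _
    _ ≤ ⨆ i, hΘ.eigenvalues i := hτ_le
end

section
/- Suppose every column of B has at most d nonzero entries (every node has at most d parents). Let Θ = (I − B)(I − B)ᵀ and τ = 1 + max_i Σ_j (B i j)². Then for every x ∈ ℝ^n, xᵀ Θ x ≤ (d+1)·τ·‖x‖²; equivalently, the largest eigenvalue of Θ is at most (d+1)·τ, and hence the smallest eigenvalue of the covariance matrix Σ = Θ⁻¹ is at least 1/((d+1)·τ). -/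
open Matrix BigOperators

/-- If every column of the strictly upper triangular `B` has at most `d`
nonzero entries, then the quadratic form of `Θ = (I − B)(I − B)ᵀ` satisfies
`xᵀ Θ x ≤ (d+1)·τ·‖x‖²` for all `x`, where `τ = 1 + max_i ∑_j (B i j)²`;
hence `λ_max(Θ) ≤ (d+1)τ` and `λ_min(Σ) ≥ 1/((d+1)τ)` for `Σ = Θ⁻¹`. -/
theorem dag_precision_quadratic_form_upper_bound (n d : ℕ) (hn : 0 < n)
    (B : Matrix (Fin n) (Fin n) ℝ)
    (hB : ∀ i j : Fin n, ¬ i < j → B i j = 0)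
    (hdeg : ∀ j : Fin n, (Finset.univ.filter fun i : Fin n => B i j ≠ 0).card ≤ d)
    (Θ : Matrix (Fin n) (Fin n) ℝ) (hΘdef : Θ = (1 - B) * (1 - B)ᵀ) :
    ∀ x : Fin n → ℝ,
      x ⬝ᵥ (Θ *ᵥ x) ≤
        (d + 1) * (1 + ⨆ i : Fin n, ∑ j : Fin n, (B i j) ^ 2) * ∑ i : Fin n, (x i) ^ 2 := by
  intro x
  subst hΘdef
  have hbdd : BddAbove (Set.range fun i : Fin n => ∑ j : Fin n, (B i j) ^ 2) :=
    (Set.finite_range _).bddAbove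
  set M := ⨆ i : Fin n, ∑ j : Fin n, (B i j) ^ 2 with hM
  have hMle : ∀ i : Fin n, ∑ j : Fin n, (B i j) ^ 2 ≤ M := fun i => le_ciSup hbdd i
  have hM0 : 0 ≤ M :=
    le_trans (Finset.sum_nonneg fun j _ => sq_nonneg _) (hMle ⟨0, hn⟩)
  set y : Fin n → ℝ := (1 - B)ᵀ *ᵥ x with hy
  have key : x ⬝ᵥ (((1 - B) * (1 - B)ᵀ) *ᵥ x) = ∑ j, y j ^ 2 := by
    rw [← Matrix.mulVec_mulVec, Matrix.dotProduct_mulVec, ← Matrix.mulVec_transpose]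
    simp [dotProduct, hy, sq]
  rw [key]
  have hyj : ∀ j : Fin n, y j = ∑ i, ((if i = j then (1 : ℝ) else 0) - B i j) * x i := by
    intro j
    simp [hy, Matrix.mulVec, dotProduct, Matrix.sub_apply, Matrix.one_apply,
      Matrix.transpose_apply, eq_comm]
  have hBjj : ∀ j : Fin n, B j j = 0 := fun j => hB j j (lt_irrefl j)
  have hperj : ∀ j : Fin n,
      y j ^ 2 ≤ (d + 1 : ℝ) * (x j ^ 2 + ∑ i, (B i j) ^ 2 * x i ^ 2) := by
    intro j
    set S := Finset.univ.filter fun i : Fin n => B i j ≠ 0 with hS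
    set T := insert j S with hT
    have hjS : j ∉ S := by simp [hS, hBjj j]
    have hcard : (T.card : ℝ) ≤ d + 1 := by
      have h1 : T.card ≤ S.card + 1 := Finset.card_insert_le j S
      have h2 : S.card + 1 ≤ d + 1 := Nat.succ_le_succ (hdeg j)
      exact_mod_cast le_trans h1 h2
    have hyT : y j = ∑ i ∈ T, ((if i = j then (1 : ℝ) else 0) - B i j) * x i := by
      rw [hyj j]
      refine (Finset.sum_subset (Finset.subset_univ T) ?_).symm
      intro i _ hiT
      have hij : i ≠ j := fun h => hiT (h ▸ Finset.mem_insert_self j S)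
      have hBij : B i j = 0 := by
        by_contra h
        exact hiT (Finset.mem_insert_of_mem (by simp [hS, h]))
      simp [hij, hBij]
    have cs := Finset.sum_mul_sq_le_sq_mul_sq T (fun _ => (1 : ℝ))
      (fun i => ((if i = j then (1 : ℝ) else 0) - B i j) * x i)
    simp only [one_mul, one_pow, Finset.sum_const, nsmul_eq_mul, mul_one] at cs
    have cs' : y j ^ 2 ≤ (T.card : ℝ) *
        ∑ i ∈ T, (((if i = j then (1 : ℝ) else 0) - B i j) * x i) ^ 2 := by
      rw [hyT]; exact cs
    have hsumT : ∑ i ∈ T, (((if i = j then (1 : ℝ) else 0) - B i j) * x i) ^ 2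
        ≤ x j ^ 2 + ∑ i, (B i j) ^ 2 * x i ^ 2 := by
      rw [hT, Finset.sum_insert hjS]
      have h1 : (((if j = j then (1 : ℝ) else 0) - B j j) * x j) ^ 2 = x j ^ 2 := by
        simp [hBjj j]
      rw [h1]
      gcongr
      have h2 : ∀ i ∈ S, (((if i = j then (1 : ℝ) else 0) - B i j) * x i) ^ 2
          = (B i j) ^ 2 * x i ^ 2 := by
        intro i hi
        have hij : i ≠ j := by
          intro h; subst h; simp [hS, hBjj i] at hi
        simp [hij, mul_pow]
      rw [Finset.sum_congr rfl h2]
      exact Finset.sum_le_sum_of_subset_of_nonneg (Finset.subset_univ S)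
        (fun i _ _ => mul_nonneg (sq_nonneg _) (sq_nonneg _))
    calc y j ^ 2 ≤ (T.card : ℝ) *
          ∑ i ∈ T, (((if i = j then (1 : ℝ) else 0) - B i j) * x i) ^ 2 := cs'
      _ ≤ (d + 1 : ℝ) * (x j ^ 2 + ∑ i, (B i j) ^ 2 * x i ^ 2) := by
          apply mul_le_mul hcard hsumT
            (Finset.sum_nonneg fun i _ => sq_nonneg _) (by positivity)
  calc ∑ j, y j ^ 2
      ≤ ∑ j, (d + 1 : ℝ) * (x j ^ 2 + ∑ i, (B i j) ^ 2 * x i ^ 2) :=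
        Finset.sum_le_sum fun j _ => hperj j
    _ = (d + 1 : ℝ) * (∑ j, x j ^ 2 + ∑ i, x i ^ 2 * ∑ j, (B i j) ^ 2) := by
        have hswap : ∀ i : Fin n, ∑ j, (B i j) ^ 2 * x i ^ 2 = x i ^ 2 * ∑ j, (B i j) ^ 2 := by
          intro i
          rw [Finset.mul_sum]
          exact Finset.sum_congr rfl fun j _ => mul_comm _ _
        rw [← Finset.mul_sum, Finset.sum_add_distrib, Finset.sum_comm]
        simp_rw [hswap]
    _ ≤ (d + 1 : ℝ) * (∑ j, x j ^ 2 + ∑ i, x i ^ 2 * M) := by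
        have hstep := Finset.sum_le_sum fun i (_ : i ∈ Finset.univ) =>
          mul_le_mul_of_nonneg_left (hMle i) (sq_nonneg (x i))
        exact mul_le_mul_of_nonneg_left (add_le_add_right hstep _) (by positivity)
    _ = (d + 1) * (1 + M) * ∑ i, (x i) ^ 2 := by
        rw [← Finset.sum_mul]; ring
end

section
/- Let Θ = (I − B)(I − B)ᵀ. Then det Θ = 1, so the smallest eigenvalue of Θ is at most 1, and for every node i the largest eigenvalue of Θ is at least 1 + Σ_j (B j i)² (one plus the sum of squared weights of the in-edges of i). Consequently the condition number of Θ satisfies κ(Θ) ≥ 1 + max_i Σ_j (B j i)²; in particular, if some node i has exactly d parents, each with edge weight of absolute value at least b_min, then κ(Θ) ≥ 1 + d·b_min². -/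
open Matrix BigOperators

lemma aux_rayleigh (n : ℕ) (A : Matrix (Fin n) (Fin n) ℝ) (hA : A.IsHermitian) (x : Fin n → ℝ) :
    x ⬝ᵥ A *ᵥ x ≤ (⨆ i, hA.eigenvalues i) * (x ⬝ᵥ x) := by
  rcases Nat.eq_zero_or_pos n with hn | hn
  · subst hn; simp [dotProduct]
  have hspec := hA.spectral_theorem
  set U : Matrix (Fin n) (Fin n) ℝ := (hA.eigenvectorUnitary : Matrix (Fin n) (Fin n) ℝ) with hU
  have hUu : U * star U = 1 := (Matrix.mem_unitaryGroup_iff).mp hA.eigenvectorUnitary.2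
  set y : Fin n → ℝ := star U *ᵥ x with hy
  have hstar : star U = Uᵀ := by ext i j; simp [star_apply]
  have hdot : ∀ z : Fin n → ℝ, x ⬝ᵥ (U *ᵥ z) = y ⬝ᵥ z := by
    intro z
    rw [Matrix.dotProduct_mulVec]
    congr 1
    rw [hy, hstar, Matrix.mulVec_transpose]
  have h1 : x ⬝ᵥ A *ᵥ x = ∑ k, hA.eigenvalues k * (y k)^2 := by
    conv_lhs => rw [hspec]
    simp only [Unitary.conjStarAlgAut_apply, Unitary.coe_star]
    rw [Matrix.mul_assoc, ← Matrix.mulVec_mulVec, ← Matrix.mulVec_mulVec, ← hy, hdot]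
    simp [dotProduct, mulVec_diagonal, Function.comp]
    exact Finset.sum_congr rfl fun k _ => by ring
  have h2 : y ⬝ᵥ y = x ⬝ᵥ x := by
    conv_lhs => rw [hy, hstar]
    rw [Matrix.dotProduct_mulVec, Matrix.vecMul_transpose, ← hstar,
      Matrix.mulVec_mulVec, hUu, Matrix.one_mulVec, dotProduct_comm]
  have hbdd : BddAbove (Set.range hA.eigenvalues) := Set.Finite.bddAbove (Set.finite_range _)
  have h3 : ∀ k, hA.eigenvalues k * (y k)^2 ≤ (⨆ i, hA.eigenvalues i) * (y k)^2 := fun k =>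
    mul_le_mul_of_nonneg_right (le_ciSup hbdd k) (sq_nonneg _)
  calc x ⬝ᵥ A *ᵥ x = ∑ k, hA.eigenvalues k * (y k)^2 := h1
    _ ≤ ∑ k, (⨆ i, hA.eigenvalues i) * (y k)^2 := Finset.sum_le_sum fun k _ => h3 k
    _ = (⨆ i, hA.eigenvalues i) * (y ⬝ᵥ y) := by rw [← Finset.mul_sum]; simp [dotProduct, sq]
    _ = _ := by rw [h2]

/-- For strictly upper triangular `B` and `Θ = (I − B)(I − B)ᵀ`:
`det Θ = 1`, hence `λ_min(Θ) ≤ 1`; for every node `i`, `λ_max(Θ) ≥ 1 + ∑_j (B j i)²`;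
consequently `κ(Θ) = λ_max/λ_min ≥ 1 + max_i ∑_j (B j i)²`, and if some node has
exactly `d` parents each with weight of absolute value at least `b_min` then
`κ(Θ) ≥ 1 + d·b_min²`. -/
theorem dag_condition_number_lower_bounds (n : ℕ) (hn : 0 < n)
    (B : Matrix (Fin n) (Fin n) ℝ)
    (hB : ∀ i j : Fin n, ¬ i < j → B i j = 0)
    (Θ : Matrix (Fin n) (Fin n) ℝ) (hΘdef : Θ = (1 - B) * (1 - B)ᵀ)
    (hΘ : Θ.IsHermitian) (b_min : ℝ) (hb : 0 < b_min) (d : ℕ) :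
    Θ.det = 1 ∧
    (⨅ i, hΘ.eigenvalues i) ≤ 1 ∧
    (∀ i : Fin n, 1 + ∑ j : Fin n, (B j i) ^ 2 ≤ ⨆ i', hΘ.eigenvalues i') ∧
    (1 + ⨆ i : Fin n, ∑ j : Fin n, (B j i) ^ 2 ≤
        (⨆ i, hΘ.eigenvalues i) / (⨅ i, hΘ.eigenvalues i)) ∧
    (∀ i : Fin n,
      (Finset.univ.filter fun j : Fin n => B j i ≠ 0).card = d →
      (∀ j : Fin n, B j i ≠ 0 → b_min ≤ |B j i|) →
      1 + d * b_min ^ 2 ≤ (⨆ i, hΘ.eigenvalues i) / (⨅ i, hΘ.eigenvalues i)) := by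
  haveI hne : Nonempty (Fin n) := ⟨⟨0, hn⟩⟩
  set M : Matrix (Fin n) (Fin n) ℝ := 1 - B with hM
  have hBdiag : ∀ i : Fin n, B i i = 0 := fun i => hB i i (lt_irrefl i)
  have hMtri : M.BlockTriangular id := by
    intro i j hij
    simp only [hM, Matrix.sub_apply, Matrix.one_apply]
    rw [if_neg (by exact fun h => absurd h.symm (ne_of_lt hij)),
      hB i j (by exact fun h => absurd (lt_trans h hij) (lt_irrefl _)), sub_zero]
  have hdetM : M.det = 1 := by
    rw [Matrix.det_of_upperTriangular hMtri]
    simp [hM, hBdiag]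
  have hdet : Θ.det = 1 := by
    rw [hΘdef, Matrix.det_mul, Matrix.det_transpose, hdetM]; norm_num
  have hconj : Mᴴ = Mᵀ := by ext i j; simp [conjTranspose_apply]
  have hpsd : Θ.PosSemidef := by
    rw [hΘdef, ← hconj]; exact Matrix.posSemidef_self_mul_conjTranspose M
  have hnonneg : ∀ i, 0 ≤ hΘ.eigenvalues i := fun i => hpsd.eigenvalues_nonneg i
  have hprod : ∏ i, hΘ.eigenvalues i = 1 := by
    have := hΘ.det_eq_prod_eigenvalues
    rw [hdet] at this
    exact_mod_cast this.symm
  have hpos : ∀ i, 0 < hΘ.eigenvalues i := by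
    intro i
    rcases (hnonneg i).lt_or_eq with h | h
    · exact h
    · exfalso
      have : ∏ j, hΘ.eigenvalues j = 0 :=
        Finset.prod_eq_zero (Finset.mem_univ i) h.symm
      rw [hprod] at this; norm_num at this
  -- the infimum
  obtain ⟨i0, hi0⟩ := Finite.exists_min hΘ.eigenvalues
  have hinfeq : (⨅ i, hΘ.eigenvalues i) = hΘ.eigenvalues i0 :=
    le_antisymm (ciInf_le (Set.Finite.bddBelow (Set.finite_range _)) i0) (le_ciInf hi0)
  have hinfpos : 0 < ⨅ i, hΘ.eigenvalues i := hinfeq ▸ hpos i0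
  -- part 2 : inf ≤ 1
  have hinfle1 : (⨅ i, hΘ.eigenvalues i) ≤ 1 := by
    by_contra h
    push_neg at h
    have hall : ∀ i, 1 < hΘ.eigenvalues i := fun i =>
      lt_of_lt_of_le h (ciInf_le (Set.Finite.bddBelow (Set.finite_range _)) i)
    have h1 : ∏ _i : Fin n, (1:ℝ) < ∏ i, hΘ.eigenvalues i :=
      Finset.prod_lt_prod_of_nonempty (fun i _ => one_pos) (fun i _ => hall i)
        Finset.univ_nonempty
    rw [hprod, Finset.prod_const_one] at h1
    exact lt_irrefl _ h1
  -- part 3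
  have part3 : ∀ i : Fin n, 1 + ∑ j : Fin n, (B j i) ^ 2 ≤ ⨆ i', hΘ.eigenvalues i' := by
    intro i
    set x : Fin n → ℝ := fun j => M j i with hx
    have hMcol : ∀ j, M j i = (if j = i then 1 else 0) - B j i := by
      intro j; simp [hM, Matrix.one_apply]
    have hxx : x ⬝ᵥ x = 1 + ∑ j : Fin n, (B j i) ^ 2 := by
      have e1 : ∀ (f : Fin n → ℝ), ∑ j, f j = f i + ∑ j ∈ Finset.univ.erase i, f j :=
        fun f => (Finset.add_sum_erase _ f (Finset.mem_univ i)).symm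
      have hxsq : x ⬝ᵥ x = ∑ j, (M j i)^2 := by
        simp [hx, dotProduct, sq]
      rw [hxsq, e1 (fun j => (M j i)^2), e1 (fun j => (B j i)^2)]
      have hMii : M i i = 1 := by rw [hMcol]; simp [hBdiag]
      have : ∀ j ∈ Finset.univ.erase i, (M j i)^2 = (B j i)^2 := by
        intro j hj
        rw [hMcol, if_neg (Finset.ne_of_mem_erase hj)]
        ring
      rw [Finset.sum_congr rfl this, hMii, hBdiag]
      ring
    set w : Fin n → ℝ := Mᵀ *ᵥ x with hw
    have hwi : w i = x ⬝ᵥ x := by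
      simp [hw, hx, Matrix.mulVec, dotProduct, transpose_apply]
    have hq : x ⬝ᵥ Θ *ᵥ x = w ⬝ᵥ w := by
      rw [hΘdef, ← Matrix.mulVec_mulVec, Matrix.dotProduct_mulVec, ← Matrix.mulVec_transpose]
    have hlow : (x ⬝ᵥ x)^2 ≤ w ⬝ᵥ w := by
      have : w i * w i ≤ ∑ k, w k * w k :=
        Finset.single_le_sum (f := fun k => w k * w k)
          (fun k _ => mul_self_nonneg (w k)) (Finset.mem_univ i)
      calc (x ⬝ᵥ x)^2 = w i * w i := by rw [hwi]; ring
        _ ≤ ∑ k, w k * w k := this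
        _ = w ⬝ᵥ w := by simp [dotProduct]
    have hray := aux_rayleigh n Θ hΘ x
    have hc1 : (1 : ℝ) ≤ x ⬝ᵥ x := by
      rw [hxx]
      have : (0:ℝ) ≤ ∑ j : Fin n, (B j i)^2 :=
        Finset.sum_nonneg fun j _ => sq_nonneg _
      linarith
    have hcpos : (0 : ℝ) < x ⬝ᵥ x := lt_of_lt_of_le one_pos hc1
    have hmul : (x ⬝ᵥ x) * (x ⬝ᵥ x) ≤ (⨆ i', hΘ.eigenvalues i') * (x ⬝ᵥ x) := by
      have := le_trans hlow (le_trans (le_of_eq hq.symm) hray)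
      nlinarith
    have := le_of_mul_le_mul_right hmul hcpos
    linarith [hxx ▸ this]
  -- sup ≤ sup / inf
  have hsup0 : (0:ℝ) ≤ ⨆ i, hΘ.eigenvalues i :=
    le_trans (hnonneg i0) (le_ciSup (Set.Finite.bddAbove (Set.finite_range _)) i0)
  have hsupdiv : (⨆ i, hΘ.eigenvalues i) ≤ (⨆ i, hΘ.eigenvalues i) / (⨅ i, hΘ.eigenvalues i) := by
    rw [le_div_iff₀ hinfpos]
    exact mul_le_of_le_one_right hsup0 hinfle1
  refine ⟨hdet, hinfle1, part3, ?_, ?_⟩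
  · have hS : ∀ i : Fin n, (∑ j : Fin n, (B j i)^2) ≤
        (⨆ i, hΘ.eigenvalues i) / (⨅ i, hΘ.eigenvalues i) - 1 := by
      intro i
      have := part3 i
      linarith
    have := ciSup_le hS
    linarith
  · intro i hcard hwmin
    have hsum : (d : ℝ) * b_min^2 ≤ ∑ j : Fin n, (B j i)^2 := by
      have h0 : ∑ _j ∈ Finset.univ.filter (fun j : Fin n => B j i ≠ 0), b_min^2
          = (d : ℝ) * b_min^2 := by
        rw [Finset.sum_const, hcard, nsmul_eq_mul]
      calc (d:ℝ)*b_min^2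
          = ∑ _j ∈ Finset.univ.filter (fun j : Fin n => B j i ≠ 0), b_min^2 := h0.symm
        _ ≤ ∑ j ∈ Finset.univ.filter (fun j : Fin n => B j i ≠ 0), (B j i)^2 := by
            refine Finset.sum_le_sum fun j hj => ?_
            have hj' : B j i ≠ 0 := (Finset.mem_filter.mp hj).2
            calc b_min^2 ≤ |B j i|^2 := pow_le_pow_left₀ hb.le (hwmin j hj') 2
              _ = (B j i)^2 := sq_abs _
        _ ≤ ∑ j : Fin n, (B j i)^2 :=
            Finset.sum_le_sum_of_subset_of_nonneg (Finset.filter_subset _ _)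
              (fun j _ _ => sq_nonneg _)
    have := part3 i
    linarith
end

section
/- Let i ∈ {1,…,n} and let J ⊆ {1,…,i−1} be a set of nodes preceding i in the topological order such that pa(i) ⊆ J (J contains all parents of i). Then the conditional variance of X_i given X_J equals 1; that is, Σ i i − (Σ i J)(Σ J J)⁻¹(Σ J i) = 1. -/
open Matrix BigOperators

section Aux

variable {n : ℕ}

/-- A matrix of the form `Mᵀ * M` with `M` real invertible is positive definite. -/
lemma aux_posdef_sub (M : Matrix (Fin n) (Fin n) ℝ) (hM : IsUnit M.det)
    (J : Finset (Fin n)) :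
    ((Mᵀ * M).submatrix (Subtype.val : J → Fin n) (Subtype.val : J → Fin n)).PosDef := by
  set S : Matrix (Fin n) (Fin n) ℝ := Mᵀ * M with hS
  have hsymm : ∀ j k, S j k = S k j := by
    intro j k
    simp only [hS, mul_apply, transpose_apply]
    exact Finset.sum_congr rfl fun t _ => mul_comm _ _
  rw [posDef_iff_dotProduct_mulVec]
  constructor
  · ext a b
    simp only [conjTranspose_apply, submatrix_apply, star_trivial]
    exact hsymm _ _
  · intro x hx
    -- extend x by zero
    set y : Fin n → ℝ := fun j => if h : j ∈ J then x ⟨j, h⟩ else 0 with hy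
    have hyJ : ∀ a : J, y a = x a := by
      intro a; simp [hy, a.2]
    have hy0 : ∀ j, j ∉ J → y j = 0 := by
      intro j hj; simp [hy, hj]
    have hyne : y ≠ 0 := by
      intro h
      apply hx
      funext a
      have := congrFun h (a : Fin n)
      rw [hyJ] at this
      simpa using this
    have key : star x ⬝ᵥ (S.submatrix (Subtype.val : J → Fin n) Subtype.val) *ᵥ x
        = star y ⬝ᵥ S *ᵥ y := by
      simp only [star_trivial, dotProduct, mulVec, dotProduct, submatrix_apply]
      rw [show (Finset.univ : Finset (Fin n)) = Finset.univ from rfl]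
      rw [← Finset.sum_subset (Finset.subset_univ J)
        (fun j _ hj => by simp [hy0 j hj])]
      rw [← Finset.sum_attach J (fun j => y j * ∑ k, S j k * y k)]
      refine Finset.sum_congr rfl fun a _ => ?_
      rw [hyJ]
      congr 1
      rw [← Finset.sum_subset (Finset.subset_univ J)
        (fun k _ hk => by simp [hy0 k hk])]
      rw [← Finset.sum_attach J (fun k => S (a : Fin n) k * y k)]
      exact Finset.sum_congr rfl fun b _ => by rw [hyJ]
    rw [key]
    have hmv : S *ᵥ y = Mᵀ *ᵥ (M *ᵥ y) := by rw [mulVec_mulVec, hS]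
    have hdp : star y ⬝ᵥ S *ᵥ y = (M *ᵥ y) ⬝ᵥ (M *ᵥ y) := by
      rw [hmv, star_trivial, dotProduct_mulVec, vecMul_transpose]
    rw [hdp]
    have hzne : M *ᵥ y ≠ 0 := by
      intro h
      apply hyne
      have : M⁻¹ *ᵥ (M *ᵥ y) = y := by
        rw [mulVec_mulVec, nonsing_inv_mul _ hM, one_mulVec]
      rw [h, mulVec_zero] at this
      exact this.symm
    obtain ⟨t, ht⟩ : ∃ t, (M *ᵥ y) t ≠ 0 := by
      by_contra h
      push_neg at h
      exact hzne (funext fun t => h t)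
    have : (0:ℝ) < ∑ t, (M *ᵥ y) t * (M *ᵥ y) t := by
      apply Finset.sum_pos' (fun t _ => mul_self_nonneg _)
      exact ⟨t, Finset.mem_univ t, mul_self_pos.mpr ht⟩
    simpa [dotProduct] using this

end Aux

/-- If `J` is a set of nodes preceding `i` in the topological order that
contains all parents of `i`, then the conditional variance of `X_i` given `X_J`, i.e. the
Schur complement `Σ i i − (Σ i J)(Σ J J)⁻¹(Σ J i)`, equals 1, where
`Σ = ((I − B)⁻¹)ᵀ(I − B)⁻¹`. -/
theorem dag_conditional_variance_eq_one (n : ℕ) (B : Matrix (Fin n) (Fin n) ℝ)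
    (hB : ∀ i j : Fin n, ¬ i < j → B i j = 0)
    (S : Matrix (Fin n) (Fin n) ℝ) (hS : S = ((1 - B)⁻¹)ᵀ * (1 - B)⁻¹)
    (i : Fin n) (J : Finset (Fin n))
    (hJlt : ∀ j ∈ J, j < i)
    (hpa : ∀ j : Fin n, B j i ≠ 0 → j ∈ J) :
    S i i - (fun a : J => S i a) ⬝ᵥ
        ((S.submatrix (Subtype.val : J → Fin n) (Subtype.val : J → Fin n))⁻¹ *ᵥ
          fun a : J => S a i) = 1 := by
  set C : Matrix (Fin n) (Fin n) ℝ := 1 - B with hC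
  -- C is upper triangular with a unit diagonal
  have hBT : C.BlockTriangular id := by
    intro a b hab
    have hb : B a b = 0 := hB a b (by exact fun h => absurd (h.trans hab) (lt_irrefl _))
    have hne : a ≠ b := fun h => absurd hab (by simp [h])
    simp [hC, hb, one_apply_ne hne]
  have hCdiag : ∀ a, C a a = 1 := by
    intro a
    have : B a a = 0 := hB a a (lt_irrefl _)
    simp [hC, this]
  have hdet : C.det = 1 := by
    rw [Matrix.det_of_upperTriangular hBT]
    simp [hCdiag]
  have hCunit : IsUnit C.det := by rw [hdet]; exact isUnit_one
  haveI : Invertible C := C.invertibleOfIsUnitDet hCunit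
  have hAinv : C⁻¹.BlockTriangular id := blockTriangular_inv_of_blockTriangular hBT
  -- S * C = (C⁻¹)ᵀ
  have hSC : S * C = (C⁻¹)ᵀ := by
    rw [hS, Matrix.mul_assoc, nonsing_inv_mul _ hCunit, Matrix.mul_one]
  -- entrywise formula for (S * C) · i
  have hentry : ∀ a : Fin n, (S * C) a i = S a i - ∑ j ∈ J, S a j * B j i := by
    intro a
    have hBsum : ∑ k, S a k * B k i = ∑ j ∈ J, S a j * B j i := by
      symm
      apply Finset.sum_subset (Finset.subset_univ J)
      intro k _ hk
      have : B k i = 0 := by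
        by_contra h
        exact hk (hpa k h)
      simp [this]
    simp only [mul_apply, hC, Matrix.sub_apply, one_apply, mul_sub]
    rw [Finset.sum_sub_distrib, hBsum]
    congr 1
    simp [mul_ite]
  -- Fact 1: for a ∈ J, S a i = ∑ j ∈ J, S a j * B j i
  have fact1 : ∀ a ∈ J, S a i = ∑ j ∈ J, S a j * B j i := by
    intro a ha
    have h0 : (S * C) a i = 0 := by
      rw [hSC, transpose_apply]
      exact hAinv (hJlt a ha)
    have := hentry a
    rw [h0] at this
    linarith [this]
  -- Fact 2: (C⁻¹) i i = 1
  have hinvdiag : C⁻¹ i i = 1 := by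
    have h1 : (C * C⁻¹) i i = 1 := by
      rw [mul_nonsing_inv _ hCunit]; simp
    have h2 : (C * C⁻¹) i i = ∑ k, C i k * C⁻¹ k i := by simp [mul_apply]
    have h3 : ∑ k, C i k * C⁻¹ k i = C i i * C⁻¹ i i := by
      apply Finset.sum_eq_single i
      · intro k _ hk
        rcases lt_or_gt_of_ne hk with h | h
        · have : C i k = 0 := hBT (by exact h)
          simp [this]
        · have : C⁻¹ k i = 0 := hAinv (by exact h)
          simp [this]
      · intro h; exact absurd (Finset.mem_univ i) h
    rw [h2, h3, hCdiag, one_mul] at h1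
    exact h1
  -- Fact 2: S i i - ∑ j ∈ J, S i j * B j i = 1
  have fact2 : S i i - ∑ j ∈ J, S i j * B j i = 1 := by
    have h0 : (S * C) i i = 1 := by rw [hSC, transpose_apply, hinvdiag]
    rw [← hentry i, h0]
  -- the submatrix is positive definite, hence invertible
  have hpos : ((S.submatrix (Subtype.val : J → Fin n) (Subtype.val : J → Fin n))).PosDef := by
    rw [hS]
    exact aux_posdef_sub (1 - B)⁻¹ (by
      rw [Matrix.det_nonsing_inv, hdet]; simp) J
  have hUdet : IsUnit (S.submatrix (Subtype.val : J → Fin n)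
      (Subtype.val : J → Fin n)).det := hpos.det_pos.ne'.isUnit
  -- the regression coefficients
  set c : J → ℝ := fun a => B a i with hc
  have hmv : (S.submatrix (Subtype.val : J → Fin n) (Subtype.val : J → Fin n)) *ᵥ c
      = fun a : J => S a i := by
    funext a
    simp only [mulVec, dotProduct, submatrix_apply, hc]
    rw [fact1 a a.2]
    rw [← Finset.sum_attach J (fun j => S (a : Fin n) j * B j i), Finset.univ_eq_attach]
  have hsolve : (S.submatrix (Subtype.val : J → Fin n) (Subtype.val : J → Fin n))⁻¹ *ᵥ
      (fun a : J => S a i) = c := by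
    rw [← hmv, mulVec_mulVec, nonsing_inv_mul _ hUdet, one_mulVec]
  rw [hsolve]
  have hdot : (fun a : J => S i a) ⬝ᵥ c = ∑ j ∈ J, S i j * B j i := by
    simp only [dotProduct, hc]
    rw [← Finset.sum_attach J (fun j => S i j * B j i), Finset.univ_eq_attach]
  rw [hdot, fact2]
end

section
/- Let i ∈ {1,…,n} be a node with at least one parent and let k be the largest parent of i in the topological order, i.e. k = max{j : B j i ≠ 0}. Let T ⊆ {1,…,k−1} be any set of nodes preceding k, and let β ∈ ℝ^T be any coefficient vector. Then the vector v = e_i − Σ_{t∈T} β_t e_t ∈ ℝ^n satisfies vᵀ Σ v ≥ 1 + (B k i)². In particular, under the minimum edge strength assumption, the variance of X_i − Σ_{t∈T} β_t X_t is at least 1 + b_min². -/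
open Matrix BigOperators

/-- Let `k` be the last (largest in the topological order) parent of `i`,
let `T` be any set of nodes preceding `k`, and let `β` be any coefficient vector. Then the
vector `v = e_i − ∑_{t∈T} β_t e_t` satisfies `vᵀ Σ v ≥ 1 + (B k i)²`; in particular, under
the minimum edge strength assumption, `vᵀ Σ v ≥ 1 + b_min²`. -/
theorem dag_variance_lower_bound_missing_parent (n : ℕ)
    (B : Matrix (Fin n) (Fin n) ℝ)
    (hB : ∀ i j : Fin n, ¬ i < j → B i j = 0)
    (b_min : ℝ) (hb : 0 < b_min)
    (hmin : ∀ i j : Fin n, B i j ≠ 0 → b_min ≤ |B i j|)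
    (S : Matrix (Fin n) (Fin n) ℝ) (hS : S = ((1 - B)⁻¹)ᵀ * (1 - B)⁻¹)
    (i k : Fin n) (hk : B k i ≠ 0)
    (hkmax : ∀ j : Fin n, B j i ≠ 0 → j ≤ k)
    (T : Finset (Fin n)) (hT : ∀ t ∈ T, t < k)
    (β : Fin n → ℝ)
    (v : Fin n → ℝ)
    (hv : ∀ j : Fin n,
      v j = (if j = i then (1:ℝ) else 0) - ∑ t ∈ T, β t * (if j = t then (1:ℝ) else 0)) :
    1 + (B k i) ^ 2 ≤ v ⬝ᵥ (S *ᵥ v) ∧ 1 + b_min ^ 2 ≤ v ⬝ᵥ (S *ᵥ v) := by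
  have hki : k < i := by
    by_contra h
    exact hk (hB k i h)
  -- determinant of (1 - B) is 1
  have htri : (1 - B : Matrix (Fin n) (Fin n) ℝ).BlockTriangular id := by
    intro a b hab
    simp only [Matrix.sub_apply, Matrix.one_apply]
    rw [if_neg (by exact fun h => absurd (h ▸ hab) (lt_irrefl _)), hB a b (by exact fun h => absurd (lt_trans h hab) (lt_irrefl _)), sub_zero]
  have hdet : (1 - B : Matrix (Fin n) (Fin n) ℝ).det = 1 := by
    rw [Matrix.det_of_upperTriangular htri]
    apply Finset.prod_eq_one
    intro x _
    simp [Matrix.sub_apply, Matrix.one_apply, hB x x (lt_irrefl x)]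
  set w : Fin n → ℝ := (1 - B)⁻¹ *ᵥ v with hwdef
  have hw : (1 - B) *ᵥ w = v := by
    rw [hwdef, Matrix.mulVec_mulVec, Matrix.mul_nonsing_inv _ (by rw [hdet]; exact isUnit_one), Matrix.one_mulVec]
  have hrec : ∀ j, w j = v j + ∑ m, B j m * w m := by
    intro j
    have h := congrFun hw j
    simp only [Matrix.mulVec, dotProduct, Matrix.sub_apply, Matrix.one_apply,
      sub_mul, ite_mul, one_mul, zero_mul] at h
    rw [Finset.sum_sub_distrib, Finset.sum_ite_eq, if_pos (Finset.mem_univ j)] at h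
    linarith [h]
  have hv0 : ∀ l : Fin n, l ≠ i → l ∉ T → v l = 0 := by
    intro l h1 h2
    rw [hv, if_neg h1, Finset.sum_eq_zero, sub_zero]
    intro t ht
    rw [if_neg (fun h => h2 (by rw [h]; exact ht)), mul_zero]
  have hzero : ∀ d : ℕ, ∀ l : Fin n, n - l.val ≤ d → k < l → l ≠ i → w l = 0 := by
    intro d
    induction d with
    | zero => intro l hl _ _; exact absurd hl (by have := l.isLt; omega)
    | succ d ih =>
      intro l hl hkl hli
      rw [hrec l, hv0 l hli (fun h => absurd (hT l h) (not_lt.mpr hkl.le)), zero_add]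
      apply Finset.sum_eq_zero
      intro m _
      by_cases hBm : B l m = 0
      · rw [hBm, zero_mul]
      · have hlm : l < m := by by_contra h; exact hBm (hB l m h)
        have hmi : m ≠ i := by rintro rfl; exact absurd (hkmax l hBm) (not_le.mpr hkl)
        have hm : n - m.val ≤ d := by
          have := m.isLt
          have : l.val < m.val := hlm
          omega
        rw [ih m hm (lt_trans hkl hlm) hmi, mul_zero]
  have hwi : w i = 1 := by
    rw [hrec i]
    have hs : ∑ m, B i m * w m = 0 := by
      apply Finset.sum_eq_zero
      intro m _
      by_cases hBm : B i m = 0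
      · rw [hBm, zero_mul]
      · have him : i < m := by by_contra h; exact hBm (hB i m h)
        rw [hzero n m (by omega) (lt_trans hki him) (ne_of_gt him), mul_zero]
    rw [hs, add_zero, hv, if_pos rfl, Finset.sum_eq_zero, sub_zero]
    intro t ht
    rw [if_neg (fun h => absurd (show i < k by rw [h]; exact hT t ht) (not_lt.mpr hki.le)), mul_zero]
  have hwk : w k = B k i := by
    rw [hrec k, hv0 k (ne_of_lt hki) (fun h => absurd (hT k h) (lt_irrefl k)), zero_add]
    rw [Finset.sum_eq_single i]
    · rw [hwi, mul_one]
    · intro m _ hmi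
      by_cases hBm : B k m = 0
      · rw [hBm, zero_mul]
      · have hkm : k < m := by by_contra h; exact hBm (hB k m h)
        rw [hzero n m (by have := m.isLt; omega) hkm hmi, mul_zero]
    · intro h; exact absurd (Finset.mem_univ i) h
  have hquad : v ⬝ᵥ (S *ᵥ v) = ∑ j, w j * w j := by
    rw [hS, ← Matrix.mulVec_mulVec, Matrix.dotProduct_mulVec, Matrix.vecMul_transpose]
    rfl
  have hik : i ≠ k := ne_of_gt hki
  have hbound : w i * w i + w k * w k ≤ ∑ j, w j * w j := by
    calc w i * w i + w k * w k = ∑ j ∈ ({i, k} : Finset (Fin n)), w j * w j := by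
          rw [Finset.sum_pair hik]
      _ ≤ ∑ j, w j * w j :=
          Finset.sum_le_sum_of_subset_of_nonneg (Finset.subset_univ _)
            (fun j _ _ => mul_self_nonneg _)
  have h1 : 1 + (B k i) ^ 2 ≤ v ⬝ᵥ (S *ᵥ v) := by
    rw [hquad]
    calc 1 + (B k i) ^ 2 = w i * w i + w k * w k := by rw [hwi, hwk]; ring
      _ ≤ _ := hbound
  refine ⟨h1, le_trans ?_ h1⟩
  have : b_min ^ 2 ≤ (B k i) ^ 2 := by
    rw [← sq_abs (B k i)]
    exact pow_le_pow_left₀ hb.le (hmin k i hk) 2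
  linarith
end

section
/- Let Y₁, …, Y_k be i.i.d. standard Gaussian random variables and set t = Σ_{i=1}^k Y_i² (so t is chi-squared with k degrees of freedom). Then for every ε > 0, P(t > (1+ε)k) ≤ ((1+ε)·e^{−ε})^{k/2}, and for every ε ∈ (0,1), P(t < (1−ε)k) ≤ ((1−ε)·e^{ε})^{k/2}. -/
open MeasureTheory ProbabilityTheory Real
open scoped ENNReal

lemma lintegral_pi_pow (μ : Measure ℝ) [SigmaFinite μ] :
    ∀ (k : ℕ) (f : ℝ → ℝ≥0∞), Measurable f →
    ∫⁻ y : Fin k → ℝ, ∏ i, f (y i) ∂(Measure.pi fun _ => μ) = (∫⁻ x, f x ∂μ) ^ k := by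
  intro k
  induction k with
  | zero => intro f hf; simp
  | succ n ih =>
    intro f hf
    have hmp := MeasureTheory.measurePreserving_piFinSuccAbove (fun _ : Fin (n+1) => μ) 0
    have hg : Measurable fun z : ℝ × (Fin n → ℝ) => f z.1 * ∏ j, f (z.2 j) :=
      (hf.comp measurable_fst).mul
        (Finset.measurable_prod _ fun j _ => hf.comp ((measurable_pi_apply j).comp measurable_snd))
    calc ∫⁻ y : Fin (n+1) → ℝ, ∏ i, f (y i) ∂(Measure.pi fun _ => μ)
        = ∫⁻ y : Fin (n+1) → ℝ,
            (fun z : ℝ × (Fin n → ℝ) => f z.1 * ∏ j, f (z.2 j))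
              (MeasurableEquiv.piFinSuccAbove (fun _ => ℝ) 0 y) ∂(Measure.pi fun _ => μ) := by
          congr 1
          funext y
          simp [MeasurableEquiv.piFinSuccAbove, Fin.prod_univ_succ, Fin.insertNthEquiv,
            Fin.zero_succAbove, Fin.tail]
      _ = ∫⁻ z, f z.1 * ∏ j, f (z.2 j) ∂(μ.prod (Measure.pi fun _ : Fin n => μ)) :=
          hmp.lintegral_comp hg
      _ = (∫⁻ x, f x ∂μ) * (∫⁻ x, f x ∂μ) ^ n := by
          rw [lintegral_prod_mul (f := f) (g := fun x : Fin n → ℝ => ∏ j, f (x j))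
            hf.aemeasurable
            (Finset.measurable_prod _ fun j _ => hf.comp (measurable_pi_apply j)).aemeasurable,
            ih f hf]
      _ = (∫⁻ x, f x ∂μ) ^ (n + 1) := by ring

lemma gaussian_lintegral_exp_sq {c : ℝ} (hc : c < 1/2) :
    ∫⁻ x, ENNReal.ofReal (Real.exp (c * x ^ 2)) ∂(gaussianReal 0 1)
      = ENNReal.ofReal (Real.sqrt (1 - 2*c))⁻¹ := by
  have hb : (0:ℝ) < 1/2 - c := by linarith
  have h1 : gaussianReal 0 1 = volume.withDensity (gaussianPDF 0 1) :=
    gaussianReal_of_var_ne_zero 0 one_ne_zero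
  rw [h1, lintegral_withDensity_eq_lintegral_mul _ (measurable_gaussianPDF 0 1)
    (by fun_prop)]
  have heq : ∀ x : ℝ, (gaussianPDF 0 1 * fun x => ENNReal.ofReal (Real.exp (c * x ^ 2))) x
      = ENNReal.ofReal ((Real.sqrt (2 * π))⁻¹ * Real.exp (-(1/2 - c) * x ^ 2)) := by
    intro x
    simp only [Pi.mul_apply, gaussianPDF, gaussianPDFReal]
    rw [← ENNReal.ofReal_mul (by positivity)]
    congr 1
    rw [mul_assoc, ← Real.exp_add]
    norm_num
    ring_nf
    tauto
  simp_rw [heq]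
  rw [← ofReal_integral_eq_lintegral_ofReal]
  · rw [integral_const_mul, integral_gaussian]
    congr 1
    have h2c : (1 - 2*c) = 2*(1/2 - c) := by ring
    rw [h2c, Real.sqrt_mul (by norm_num : (0:ℝ) ≤ 2), Real.sqrt_mul (by norm_num : (0:ℝ) ≤ 2) (1/2 - c),
      Real.sqrt_div Real.pi_nonneg]
    have hπ : Real.sqrt π ≠ 0 := (Real.sqrt_pos.mpr Real.pi_pos).ne'
    have h2 : Real.sqrt 2 ≠ 0 := by positivity
    have hbc : Real.sqrt (1/2 - c) ≠ 0 := (Real.sqrt_pos.mpr hb).ne'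
    have hX : (0:ℝ) < Real.sqrt (1 - 2*c) := Real.sqrt_pos.mpr (by linarith)
    field_simp
  · exact (integrable_exp_neg_mul_sq hb).const_mul _
  · exact ae_of_all _ fun x => by positivity

lemma chernoff_bound (k : ℕ) {c : ℝ} (hc : c < 1/2) (A : Set (Fin k → ℝ)) (b : ℝ)
    (hA : ∀ y ∈ A, b ≤ c * ∑ i, (y i) ^ 2) :
    (Measure.pi fun _ : Fin k => gaussianReal 0 1) A ≤
      ENNReal.ofReal (Real.exp (-b) * ((Real.sqrt (1 - 2*c))⁻¹) ^ k) := by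
  set μ := Measure.pi fun _ : Fin k => gaussianReal 0 1 with hμ
  set f : (Fin k → ℝ) → ℝ≥0∞ := fun y => ENNReal.ofReal (Real.exp (c * ∑ i, (y i) ^ 2)) with hfdef
  have hmeasf : Measurable f := by
    apply Measurable.ennreal_ofReal
    apply Real.measurable_exp.comp
    exact measurable_const.mul (Finset.measurable_sum _ fun i _ => (measurable_pi_apply i).pow_const 2)
  have hsub : A ⊆ {y | ENNReal.ofReal (Real.exp b) ≤ f y} := fun y hy =>
    ENNReal.ofReal_le_ofReal (Real.exp_le_exp.mpr (hA y hy))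
  have hmarkov := mul_meas_ge_le_lintegral (μ := μ) hmeasf (ENNReal.ofReal (Real.exp b))
  have hint : ∫⁻ y, f y ∂μ = ENNReal.ofReal (((Real.sqrt (1 - 2*c))⁻¹) ^ k) := by
    have hprod : ∀ y : Fin k → ℝ,
        f y = ∏ i, ENNReal.ofReal (Real.exp (c * (y i) ^ 2)) := by
      intro y
      rw [hfdef]
      simp only
      rw [Finset.mul_sum, Real.exp_sum, ENNReal.ofReal_prod_of_nonneg]
      intro i _
      exact (Real.exp_pos _).le
    simp_rw [hprod]
    have hm1 : Measurable fun x : ℝ => ENNReal.ofReal (Real.exp (c * x ^ 2)) := by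
      apply Measurable.ennreal_ofReal
      exact Real.measurable_exp.comp (measurable_const.mul (measurable_id.pow_const 2))
    rw [hμ, lintegral_pi_pow (gaussianReal 0 1) k
        (fun x => ENNReal.ofReal (Real.exp (c * x ^ 2))) hm1,
      gaussian_lintegral_exp_sq hc, ← ENNReal.ofReal_pow (by positivity)]
  have hε0 : ENNReal.ofReal (Real.exp b) ≠ 0 := by
    simp [ENNReal.ofReal_eq_zero, not_le, Real.exp_pos]
  calc μ A ≤ μ {y | ENNReal.ofReal (Real.exp b) ≤ f y} := measure_mono hsub
    _ ≤ (∫⁻ y, f y ∂μ) / ENNReal.ofReal (Real.exp b) := by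
        rw [ENNReal.le_div_iff_mul_le (Or.inl hε0) (Or.inl ENNReal.ofReal_ne_top)]
        rw [mul_comm]
        exact hmarkov
    _ = ENNReal.ofReal (Real.exp (-b) * ((Real.sqrt (1 - 2*c))⁻¹) ^ k) := by
        rw [hint, ENNReal.div_eq_inv_mul, ← ENNReal.ofReal_inv_of_pos (Real.exp_pos b),
          ← ENNReal.ofReal_mul (by positivity), ← Real.exp_neg]

lemma bound_eq_aux (a e' : ℝ) (ha : 0 ≤ a) (k : ℕ) :
    Real.exp (e' * k / 2) * (Real.sqrt a) ^ k = (a * Real.exp e') ^ ((k : ℝ) / 2) := by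
  rw [Real.mul_rpow ha (Real.exp_pos _).le, Real.sqrt_eq_rpow,
    ← Real.rpow_natCast (a ^ ((1:ℝ)/2)) k, ← Real.rpow_mul ha,
    show e' * k / 2 = e' * ((k:ℝ)/2) by ring, Real.exp_mul,
    show (1:ℝ)/2 * (k:ℕ) = (k:ℝ)/2 by ring, mul_comm]

/-- Chi-squared tail bounds: if `t = ∑_{i=1}^k Y_i²` with `Y_i` i.i.d.
standard Gaussians, then `P(t > (1+ε)k) ≤ ((1+ε)e^{−ε})^{k/2}` for every `ε > 0`, and
`P(t < (1−ε)k) ≤ ((1−ε)e^{ε})^{k/2}` for every `ε ∈ (0,1)`. -/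
theorem chi_squared_tail_bounds (k : ℕ) (ε : ℝ) :
    (0 < ε →
      (Measure.pi fun _ : Fin k => gaussianReal 0 1)
          {y : Fin k → ℝ | (1 + ε) * k < ∑ i, (y i) ^ 2} ≤
        ENNReal.ofReal (((1 + ε) * Real.exp (-ε)) ^ ((k : ℝ) / 2))) ∧
    (0 < ε → ε < 1 →
      (Measure.pi fun _ : Fin k => gaussianReal 0 1)
          {y : Fin k → ℝ | ∑ i, (y i) ^ 2 < (1 - ε) * k} ≤
        ENNReal.ofReal (((1 - ε) * Real.exp ε) ^ ((k : ℝ) / 2))) := by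
  constructor
  · intro hε
    have h1e : (0:ℝ) < 1 + ε := by linarith
    set s : ℝ := ε / (2 * (1 + ε)) with hs
    have hspos : 0 < s := by positivity
    have hc : s < 1/2 := by
      rw [hs, div_lt_div_iff₀ (by positivity) (by norm_num)]
      linarith
    have h12 : 1 - 2*s = (1 + ε)⁻¹ := by
      rw [hs]; field_simp; ring
    have hbound := chernoff_bound k hc
      {y : Fin k → ℝ | (1 + ε) * k < ∑ i, (y i) ^ 2} (s * ((1 + ε) * k))
      (fun y hy => mul_le_mul_of_nonneg_left (le_of_lt hy) hspos.le)
    refine hbound.trans (le_of_eq ?_)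
    congr 1
    rw [h12, Real.sqrt_inv, inv_inv,
      show -(s * ((1 + ε) * k)) = -ε * k / 2 by rw [hs]; field_simp]
    exact bound_eq_aux (1 + ε) (-ε) h1e.le k
  · intro hε hε1
    have h1e : (0:ℝ) < 1 - ε := by linarith
    set s : ℝ := ε / (2 * (1 - ε)) with hs
    have hspos : 0 < s := by positivity
    have hc : -s < 1/2 := by linarith
    have h12 : 1 - 2*(-s) = (1 - ε)⁻¹ := by
      rw [hs]; field_simp; ring
    have hbound := chernoff_bound k hc
      {y : Fin k → ℝ | ∑ i, (y i) ^ 2 < (1 - ε) * k} (-s * ((1 - ε) * k))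
      (fun y hy => by
        simp only [neg_mul]
        exact neg_le_neg (mul_le_mul_of_nonneg_left (le_of_lt hy) hspos.le))
    refine hbound.trans (le_of_eq ?_)
    congr 1
    rw [h12, Real.sqrt_inv, inv_inv,
      show -(-s * ((1 - ε) * k)) = ε * k / 2 by rw [hs]; field_simp]
    exact bound_eq_aux (1 - ε) ε h1e.le k
end

section
/- Let Y₁, …, Y_k be i.i.d. standard Gaussian random variables and set t = Σ_{i=1}^k Y_i². Then for every δ ∈ (0, 1/2), P(t > 2k + 4·log(1/δ)) ≤ δ. -/
open MeasureTheory ProbabilityTheory Real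
open scoped ENNReal NNReal

lemma gauss_wd : (gaussianReal 0 1) = volume.withDensity (fun x => ((gaussianPDFReal 0 1 x).toNNReal : ℝ≥0∞)) := by
  rw [gaussianReal_of_var_ne_zero 0 one_ne_zero]
  congr 1

lemma pdf_mul (x : ℝ) : gaussianPDFReal 0 1 x * rexp (x ^ 2 / 4) = (√(2 * π))⁻¹ * rexp (-(1/4) * x ^ 2) := by
  rw [gaussianPDFReal]
  simp only [NNReal.coe_one, mul_one, sub_zero]
  rw [mul_assoc, ← Real.exp_add]
  ring_nf

lemma hmeas : Measurable (fun x : ℝ => (gaussianPDFReal 0 1 x).toNNReal) :=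
  (measurable_gaussianPDFReal 0 1).real_toNNReal

lemma hint1 : Integrable (fun x : ℝ => rexp (x ^ 2 / 4)) (gaussianReal 0 1) := by
  rw [gauss_wd]
  have h2 : Integrable (fun x : ℝ => (gaussianPDFReal 0 1 x).toNNReal • rexp (x ^ 2 / 4)) volume := by
    have : (fun x : ℝ => (gaussianPDFReal 0 1 x).toNNReal • rexp (x ^ 2 / 4))
        = fun x => (√(2 * π))⁻¹ * rexp (-(1/4) * x ^ 2) := by
      ext x
      rw [NNReal.smul_def, smul_eq_mul, Real.coe_toNNReal _ (gaussianPDFReal_nonneg 0 1 x), pdf_mul]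
    rw [this]
    exact (integrable_exp_neg_mul_sq (by norm_num)).const_mul _
  exact (integrable_withDensity_iff_integrable_smul hmeas).mpr h2

lemma hval1 : ∫ x, rexp (x ^ 2 / 4) ∂(gaussianReal 0 1) = √2 := by
  rw [gauss_wd, integral_withDensity_eq_integral_smul hmeas]
  have : (fun x : ℝ => (gaussianPDFReal 0 1 x).toNNReal • rexp (x ^ 2 / 4))
      = fun x => (√(2 * π))⁻¹ * rexp (-(1/4) * x ^ 2) := by
    ext x
    rw [NNReal.smul_def, smul_eq_mul, Real.coe_toNNReal _ (gaussianPDFReal_nonneg 0 1 x), pdf_mul]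
  rw [this, integral_const_mul, integral_gaussian]
  rw [← Real.sqrt_inv, ← Real.sqrt_mul (by positivity)]
  norm_num
  congr 1
  field_simp
  ring

/-- If `t = ∑_{i=1}^k Y_i²` with `Y_i` i.i.d. standard Gaussians, then for
every `δ ∈ (0, 1/2)`, `P(t > 2k + 4·log(1/δ))` ≤ δ. -/
theorem chi_squared_tail_bound_log (k : ℕ) (δ : ℝ) (hδ0 : 0 < δ) (hδ : δ < 1 / 2) :
    (Measure.pi fun _ : Fin k => gaussianReal 0 1)
        {y : Fin k → ℝ | 2 * k + 4 * Real.log (1 / δ) < ∑ i, (y i) ^ 2} ≤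
      ENNReal.ofReal δ := by
  letI : MeasureSpace ℝ := ⟨gaussianReal 0 1⟩
  haveI : SigmaFinite (volume : Measure ℝ) := inferInstanceAs (SigmaFinite (gaussianReal 0 1))
  set a : ℝ := 2 * k + 4 * Real.log (1 / δ) with ha
  clear_value a
  set μ : Measure (Fin k → ℝ) := Measure.pi fun _ : Fin k => gaussianReal 0 1 with hμ
  have hμvol : μ = (volume : Measure (Fin k → ℝ)) := (volume_pi).symm
  have hint : Integrable (fun y : Fin k → ℝ => ∏ i, rexp ((y i) ^ 2 / 4)) volume :=
    Integrable.fintype_prod (fun _ => hint1)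
  have hval : (∫ y : Fin k → ℝ, ∏ i, rexp ((y i) ^ 2 / 4)) = (√2) ^ k := by
    rw [volume_pi, integral_fintype_prod_eq_pow (ι := Fin k) (fun x : ℝ => rexp (x ^ 2 / 4))]
    rw [Fintype.card_fin]
    congr 1
    exact hval1
  have hprod : ∀ y : Fin k → ℝ, ∏ i, rexp ((y i) ^ 2 / 4) = rexp ((∑ i, (y i) ^ 2) / 4) := by
    intro y
    rw [Finset.sum_div, Real.exp_sum]
  have hf_meas : AEMeasurable (fun y : Fin k → ℝ =>
      ENNReal.ofReal (rexp ((∑ i, (y i) ^ 2) / 4))) μ := by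
    apply Measurable.aemeasurable
    apply ENNReal.measurable_ofReal.comp
    apply Real.measurable_exp.comp
    apply Measurable.div_const
    exact Finset.measurable_sum _ (fun i _ => (measurable_pi_apply i).pow_const 2)
  have hlint : (∫⁻ y, ENNReal.ofReal (rexp ((∑ i, (y i) ^ 2) / 4)) ∂μ)
      = ENNReal.ofReal ((√2) ^ k) := by
    simp_rw [← hprod, hμvol]
    rw [← ofReal_integral_eq_lintegral_ofReal hint
      (ae_of_all _ fun y => Finset.prod_nonneg fun i _ => (Real.exp_pos _).le), hval]
  have key := mul_meas_ge_le_lintegral₀ (μ := μ) hf_meas (ENNReal.ofReal (rexp (a / 4)))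
  have hsub : {y : Fin k → ℝ | a < ∑ i, (y i) ^ 2} ⊆
      {y : Fin k → ℝ | ENNReal.ofReal (rexp (a / 4)) ≤
        ENNReal.ofReal (rexp ((∑ i, (y i) ^ 2) / 4))} := by
    intro y hy
    have hy' : a < ∑ i, (y i) ^ 2 := hy
    exact ENNReal.ofReal_le_ofReal (Real.exp_le_exp.mpr (by linarith))
  have hε0 : (ENNReal.ofReal (rexp (a / 4))) ≠ 0 := by
    simp [ENNReal.ofReal_eq_zero, not_le, Real.exp_pos]
  have hεtop : (ENNReal.ofReal (rexp (a / 4))) ≠ ⊤ := ENNReal.ofReal_ne_top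
  have step : ENNReal.ofReal (rexp (a / 4)) * μ {y : Fin k → ℝ | a < ∑ i, (y i) ^ 2}
      ≤ ENNReal.ofReal ((√2) ^ k) := by
    calc ENNReal.ofReal (rexp (a / 4)) * μ {y : Fin k → ℝ | a < ∑ i, (y i) ^ 2}
        ≤ ENNReal.ofReal (rexp (a / 4)) * μ {y : Fin k → ℝ |
            ENNReal.ofReal (rexp (a / 4)) ≤ ENNReal.ofReal (rexp ((∑ i, (y i) ^ 2) / 4))} :=
          mul_le_mul_right (measure_mono hsub) _
      _ ≤ _ := hlint ▸ key
  have hreal : (√2) ^ k / rexp (a / 4) ≤ δ := by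
    have h1 : rexp (a / 4) = rexp ((k : ℝ) / 2) / δ := by
      have : a / 4 = (k : ℝ) / 2 + Real.log (1 / δ) := by rw [ha]; ring
      rw [this, Real.exp_add, Real.exp_log (by positivity)]
      ring
    have h2 : (√2) ^ k ≤ rexp ((k : ℝ) / 2) := by
      have : rexp ((k : ℝ) / 2) = (rexp (1 / 2)) ^ k := by
        rw [← Real.exp_nat_mul]; congr 1; ring
      rw [this]
      refine pow_le_pow_left₀ (Real.sqrt_nonneg 2) ?_ k
      rw [Real.exp_half]
      exact Real.sqrt_le_sqrt (by linarith [Real.add_one_le_exp 1])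
    rw [h1, div_div_eq_mul_div, div_le_iff₀ (by positivity)]
    calc (√2) ^ k * δ ≤ rexp ((k : ℝ) / 2) * δ := by nlinarith [Real.exp_pos ((k:ℝ)/2)]
      _ = δ * rexp ((k : ℝ) / 2) := mul_comm _ _
  calc μ {y : Fin k → ℝ | a < ∑ i, (y i) ^ 2}
      ≤ ENNReal.ofReal ((√2) ^ k) / ENNReal.ofReal (rexp (a / 4)) := by
        rw [ENNReal.le_div_iff_mul_le (Or.inl hε0) (Or.inl hεtop), mul_comm]
        exact step
    _ = ENNReal.ofReal ((√2) ^ k / rexp (a / 4)) :=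
        (ENNReal.ofReal_div_of_pos (Real.exp_pos _)).symm
    _ ≤ ENNReal.ofReal δ := ENNReal.ofReal_le_ofReal hreal
end

section
/- Let Y₁, …, Y_m be i.i.d. centered Gaussian random variables with variance σ² > 0, let ε ∈ (0, 1/2) and δ ∈ (0, 1), and suppose m ≥ 6·log(2/δ)/ε². Then with probability at least 1 − δ one has (1−ε)·σ² ≤ (1/m)·Σ_{i=1}^m Y_i² ≤ (1+ε)·σ². -/
open MeasureTheory ProbabilityTheory Real
open scoped NNReal ENNReal

private lemma evc_log_one_add {e : ℝ} (he0 : 0 < e) (he : e ≤ 1/2) :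
    Real.log (1+e) ≤ e - e^2/3 := by
  have hx : 0 ≤ e - e^2/3 := by nlinarith
  have h := Real.sum_le_exp_of_nonneg hx 3
  have hs : ∑ i ∈ Finset.range 3, (e - e^2/3)^i / i.factorial
      = 1 + (e-e^2/3) + (e-e^2/3)^2/2 := by
    rw [Finset.sum_range_succ, Finset.sum_range_succ, Finset.sum_range_one]
    norm_num [Nat.factorial]
  rw [hs] at h
  have h1 : 1 + e ≤ exp (e - e^2/3) := by nlinarith
  calc Real.log (1+e) ≤ Real.log (exp (e - e^2/3)) := Real.log_le_log (by linarith) h1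
    _ = e - e^2/3 := Real.log_exp _

private lemma evc_log_one_sub {e : ℝ} (he0 : 0 < e) (he : e ≤ 1/2) :
    Real.log (1-e) ≤ -(e + e^2/3) := by
  set x := e + e^2/3 with hxdef
  have hx0 : 0 ≤ x := by positivity
  have hx1 : x ≤ 1 := by rw [hxdef]; nlinarith
  have h := Real.exp_bound' hx0 hx1 (n := 3) (by norm_num)
  have hs : (∑ m ∈ Finset.range 3, x^m / m.factorial)
      + x^3 * ((3:ℕ)+1)/((Nat.factorial 3 : ℕ) * (3:ℕ)) = 1 + x + x^2/2 + x^3 * 2/9 := by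
    rw [Finset.sum_range_succ, Finset.sum_range_succ, Finset.sum_range_one]
    norm_num [Nat.factorial]; ring
  rw [hs] at h
  have key : (1-e) * exp x ≤ 1 := by
    rw [hxdef] at h ⊢
    nlinarith [sq_nonneg e, pow_pos he0 3, pow_pos he0 4, exp_pos (e + e^2/3)]
  have hmul : exp (-x) * exp x = 1 := by rw [← Real.exp_add]; simp
  have h1 : 1 - e ≤ exp (-x) := by nlinarith [exp_pos x, exp_pos (-x)]
  calc Real.log (1-e) ≤ Real.log (exp (-x)) := Real.log_le_log (by linarith) h1
    _ = -x := Real.log_exp _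

private lemma evc_gauss_pdf_mul {v : ℝ≥0} (hv : 0 < (v:ℝ)) (t : ℝ) (x : ℝ) :
    gaussianPDFReal 0 v x * exp (t * x^2)
      = (Real.sqrt (2*π*v))⁻¹ * exp (-((1 - 2*t*v)/(2*v)) * x^2) := by
  rw [gaussianPDFReal]
  rw [mul_assoc, ← Real.exp_add]
  congr 2
  field_simp
  ring

private lemma evc_gauss_sq_exp_integrable {v : ℝ≥0} (hv : 0 < (v:ℝ)) {t : ℝ}
    (ht : 2*t*v < 1) :
    Integrable (fun x => exp (t * x^2)) (gaussianReal 0 v) := by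
  have hv0 : v ≠ 0 := by exact_mod_cast hv.ne'
  rw [gaussianReal_of_var_ne_zero _ hv0]
  have hpdf : (gaussianPDF 0 v)
      = fun x => ((Real.toNNReal (gaussianPDFReal 0 v x) : ℝ≥0) : ℝ≥0∞) := rfl
  rw [hpdf]
  rw [integrable_withDensity_iff_integrable_coe_smul
    ((measurable_gaussianPDFReal 0 v).real_toNNReal)]
  have : (fun x => ((Real.toNNReal (gaussianPDFReal 0 v x) : ℝ≥0) : ℝ) • exp (t * x^2))
      = fun x => (Real.sqrt (2*π*v))⁻¹ * exp (-((1 - 2*t*v)/(2*v)) * x^2) := by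
    ext x
    rw [smul_eq_mul, Real.coe_toNNReal _ (gaussianPDFReal_nonneg 0 v x), evc_gauss_pdf_mul hv]
  rw [this]
  exact (integrable_exp_neg_mul_sq (div_pos (by linarith) (by positivity))).const_mul _

private lemma evc_gauss_sq_exp_integral {v : ℝ≥0} (hv : 0 < (v:ℝ)) {t : ℝ}
    (ht : 2*t*v < 1) :
    ∫ x, exp (t * x^2) ∂(gaussianReal 0 v) = (Real.sqrt (1 - 2*t*v))⁻¹ := by
  have hv0 : v ≠ 0 := by exact_mod_cast hv.ne'
  rw [gaussianReal_of_var_ne_zero _ hv0]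
  have hpdf : (gaussianPDF 0 v)
      = fun x => ((Real.toNNReal (gaussianPDFReal 0 v x) : ℝ≥0) : ℝ≥0∞) := rfl
  rw [hpdf, integral_withDensity_eq_integral_smul
    ((measurable_gaussianPDFReal 0 v).real_toNNReal)]
  have heq : (fun x => (Real.toNNReal (gaussianPDFReal 0 v x) : ℝ≥0) • exp (t * x^2))
      = fun x => (Real.sqrt (2*π*v))⁻¹ * exp (-((1 - 2*t*v)/(2*v)) * x^2) := by
    ext x
    rw [NNReal.smul_def, smul_eq_mul, Real.coe_toNNReal _ (gaussianPDFReal_nonneg 0 v x),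
      evc_gauss_pdf_mul hv]
  rw [heq, integral_const_mul, integral_gaussian]
  have hc : (0:ℝ) < 1 - 2*t*v := by linarith
  rw [show π / ((1 - 2*t*v)/(2*v)) = (2*π*v) / (1 - 2*t*v) by field_simp]
  rw [Real.sqrt_div (by positivity : (0:ℝ) ≤ 2*π*v)]
  have hA : Real.sqrt (2*π*(v:ℝ)) ≠ 0 := by positivity
  field_simp

private lemma evc_pi_exp_sum_integrable {m : ℕ} (μ : Measure ℝ) [SigmaFinite μ] {t : ℝ}
    (h : Integrable (fun x => exp (t * x^2)) μ) :
    Integrable (fun y : Fin m → ℝ => exp (t * ∑ i, (y i)^2)) (Measure.pi fun _ => μ) := by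
  letI : MeasureSpace ℝ := ⟨μ⟩
  haveI : SigmaFinite (volume : Measure ℝ) := ‹SigmaFinite μ›
  have hvol : (Measure.pi fun _ : Fin m => μ) = (volume : Measure (Fin m → ℝ)) := rfl
  have heq : (fun y : Fin m → ℝ => exp (t * ∑ i, (y i)^2))
      = fun y : Fin m → ℝ => ∏ i, exp (t * (y i)^2) := by
    ext y
    rw [Finset.mul_sum, Real.exp_sum]
  rw [hvol, heq]
  exact Integrable.fintype_prod (f := fun _ x => exp (t * x^2)) (fun _ => h)

private lemma evc_pi_exp_sum_integral {m : ℕ} (μ : Measure ℝ) [SigmaFinite μ] (t : ℝ) :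
    ∫ y : Fin m → ℝ, exp (t * ∑ i, (y i)^2) ∂(Measure.pi fun _ => μ)
      = (∫ x, exp (t * x^2) ∂μ)^m := by
  letI : MeasureSpace ℝ := ⟨μ⟩
  haveI : SigmaFinite (volume : Measure ℝ) := ‹SigmaFinite μ›
  have hvol : (Measure.pi fun _ : Fin m => μ) = (volume : Measure (Fin m → ℝ)) := rfl
  have heq : (fun y : Fin m → ℝ => exp (t * ∑ i, (y i)^2))
      = fun y : Fin m → ℝ => ∏ i, exp (t * (y i)^2) := by
    ext y
    rw [Finset.mul_sum, Real.exp_sum]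
  rw [hvol, heq]
  erw [MeasureTheory.integral_fintype_prod_eq_pow (ι := Fin m) (fun x => exp (t * x^2))]
  rw [Fintype.card_fin]
  rfl

private lemma evc_chernoff_upper (m : ℕ) {v : ℝ≥0} (hv : 0 < (v:ℝ)) {t : ℝ}
    (ht0 : 0 ≤ t) (ht : 2*t*v < 1) (a : ℝ) :
    ((Measure.pi fun _ : Fin m => gaussianReal 0 v) {y | a ≤ ∑ i, (y i)^2}).toReal
      ≤ exp (-t*a) * ((Real.sqrt (1 - 2*t*v))⁻¹)^m := by
  have hint := evc_pi_exp_sum_integrable (m := m) (gaussianReal 0 v)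
    (evc_gauss_sq_exp_integrable hv ht)
  haveI hPM : IsProbabilityMeasure (Measure.pi fun _ : Fin m => gaussianReal 0 v) :=
    MeasureTheory.Measure.pi.instIsProbabilityMeasure _
  have h := @measure_ge_le_exp_mul_mgf (Fin m → ℝ) _ (fun y => ∑ i, (y i)^2)
    (Measure.pi fun _ : Fin m => gaussianReal 0 v) t (by infer_instance) a ht0 hint
  rwa [mgf, evc_pi_exp_sum_integral, evc_gauss_sq_exp_integral hv ht] at h

private lemma evc_chernoff_lower (m : ℕ) {v : ℝ≥0} (hv : 0 < (v:ℝ)) {t : ℝ}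
    (ht0 : t ≤ 0) (ht : 2*t*v < 1) (a : ℝ) :
    ((Measure.pi fun _ : Fin m => gaussianReal 0 v) {y | ∑ i, (y i)^2 ≤ a}).toReal
      ≤ exp (-t*a) * ((Real.sqrt (1 - 2*t*v))⁻¹)^m := by
  have hint := evc_pi_exp_sum_integrable (m := m) (gaussianReal 0 v)
    (evc_gauss_sq_exp_integrable hv ht)
  haveI hPM : IsProbabilityMeasure (Measure.pi fun _ : Fin m => gaussianReal 0 v) :=
    MeasureTheory.Measure.pi.instIsProbabilityMeasure _
  have h := @measure_le_le_exp_mul_mgf (Fin m → ℝ) _ (fun y => ∑ i, (y i)^2)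
    (Measure.pi fun _ : Fin m => gaussianReal 0 v) t (by infer_instance) a ht0 hint
  rwa [mgf, evc_pi_exp_sum_integral, evc_gauss_sq_exp_integral hv ht] at h

/-- If `Y_1, …, Y_m` are i.i.d. centered Gaussians with variance `σ² > 0`,
`ε ∈ (0, 1/2)`, `δ ∈ (0,1)` and `m ≥ 6·log(2/δ)/ε²`, then with probability at least `1 − δ`
the empirical second moment `(1/m)·∑ Y_i²` lies in `[(1−ε)σ², (1+ε)σ²]`. -/
theorem empirical_variance_concentration (m : ℕ) (σ : ℝ) (hσ : 0 < σ)
    (ε δ : ℝ) (hε0 : 0 < ε) (hε : ε < 1 / 2) (hδ0 : 0 < δ) (hδ : δ < 1)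
    (hm : 6 * Real.log (2 / δ) / ε ^ 2 ≤ (m : ℝ)) :
    ENNReal.ofReal (1 - δ) ≤
      (Measure.pi fun _ : Fin m => gaussianReal 0 (Real.toNNReal (σ ^ 2)))
        {y : Fin m → ℝ |
          (1 - ε) * σ ^ 2 ≤ (1 / m) * ∑ i, (y i) ^ 2 ∧
          (1 / m) * ∑ i, (y i) ^ 2 ≤ (1 + ε) * σ ^ 2} := by
  set v : ℝ≥0 := Real.toNNReal (σ ^ 2) with hvdef
  have hvc : (v:ℝ) = σ^2 := Real.coe_toNNReal _ (sq_nonneg σ)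
  have hσ2 : (0:ℝ) < σ^2 := by positivity
  have hv : 0 < (v:ℝ) := by rw [hvc]; exact hσ2
  set P := Measure.pi fun _ : Fin m => gaussianReal 0 v with hPdef
  haveI : IsProbabilityMeasure P := by
    rw [hPdef]; infer_instance
  -- m is positive
  have hlog : 0 < Real.log (2/δ) := Real.log_pos (by rw [lt_div_iff₀ hδ0]; linarith)
  have hmpos : (0:ℝ) < m := lt_of_lt_of_le (by positivity) hm
  have hmε : 6 * Real.log (2/δ) ≤ (m:ℝ) * ε^2 := by
    rw [div_le_iff₀ (by positivity : (0:ℝ) < ε^2)] at hm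
    linarith
  have hδ2 : (0:ℝ) < δ/2 := by linarith
  have hlogδ2 : Real.log (δ/2) = -Real.log (2/δ) := by
    rw [Real.log_div hδ0.ne' two_ne_zero, Real.log_div two_ne_zero hδ0.ne']
    ring
  have hexpδ : exp (-((m:ℝ) * ε^2/6)) ≤ δ/2 := by
    rw [← Real.exp_log hδ2]
    apply Real.exp_le_exp.2
    rw [hlogδ2]
    linarith
  -- upper tail
  have hupper : (P {y : Fin m → ℝ | (m:ℝ)*(1+ε)*σ^2 ≤ ∑ i, (y i)^2}).toReal ≤ δ/2 := by
    set t : ℝ := ε/(2*σ^2*(1+ε)) with htdef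
    have ht0 : 0 ≤ t := by positivity
    have h2t : 2*t*(v:ℝ) = ε/(1+ε) := by
      rw [hvc, htdef]; field_simp
    have ht : 2*t*(v:ℝ) < 1 := by
      rw [h2t, div_lt_one (by linarith)]; linarith
    have h := evc_chernoff_upper m hv ht0 ht ((m:ℝ)*(1+ε)*σ^2)
    rw [← hPdef] at h
    refine h.trans ?_
    have h1 : 1 - 2*t*(v:ℝ) = (1+ε)⁻¹ := by
      rw [h2t]; field_simp; ring
    have h2 : ((Real.sqrt (1 - 2*t*(v:ℝ)))⁻¹)^m = exp ((m:ℝ) * (Real.log (1+ε)/2)) := by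
      rw [h1, Real.sqrt_inv, inv_inv,
        ← Real.exp_log (Real.sqrt_pos.2 (by linarith : (0:ℝ) < 1+ε)),
        Real.log_sqrt (by linarith : (0:ℝ) ≤ 1+ε), ← Real.exp_nat_mul]
    have h3 : -t*((m:ℝ)*(1+ε)*σ^2) = -((m:ℝ)*ε/2) := by
      rw [htdef]; field_simp
    rw [h2, h3, ← Real.exp_add]
    have hL := evc_log_one_add hε0 hε.le
    refine le_trans (Real.exp_le_exp.2 ?_) hexpδ
    have hm0 : (0:ℝ) ≤ (m:ℝ) := hmpos.le
    nlinarith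
  -- lower tail
  have hlower : (P {y : Fin m → ℝ | ∑ i, (y i)^2 ≤ (m:ℝ)*(1-ε)*σ^2}).toReal ≤ δ/2 := by
    set t : ℝ := -(ε/(2*σ^2*(1-ε))) with htdef
    have hε1 : (0:ℝ) < 1 - ε := by linarith
    have ht0 : t ≤ 0 := by rw [htdef]; simp; positivity
    have h2t : 2*t*(v:ℝ) = -(ε/(1-ε)) := by
      rw [hvc, htdef]; field_simp
    have ht : 2*t*(v:ℝ) < 1 := by
      rw [h2t]; have : 0 < ε/(1-ε) := by positivity
      linarith
    have h := evc_chernoff_lower m hv ht0 ht ((m:ℝ)*(1-ε)*σ^2)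
    rw [← hPdef] at h
    refine h.trans ?_
    have h1 : 1 - 2*t*(v:ℝ) = (1-ε)⁻¹ := by
      rw [h2t]; field_simp; ring
    have h2 : ((Real.sqrt (1 - 2*t*(v:ℝ)))⁻¹)^m = exp ((m:ℝ) * (Real.log (1-ε)/2)) := by
      rw [h1, Real.sqrt_inv, inv_inv, ← Real.exp_log (Real.sqrt_pos.2 hε1),
        Real.log_sqrt hε1.le, ← Real.exp_nat_mul]
    have h3 : -t*((m:ℝ)*(1-ε)*σ^2) = (m:ℝ)*ε/2 := by
      rw [htdef]; field_simp
    rw [h2, h3, ← Real.exp_add]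
    have hL := evc_log_one_sub hε0 hε.le
    refine le_trans (Real.exp_le_exp.2 ?_) hexpδ
    have hm0 : (0:ℝ) ≤ (m:ℝ) := hmpos.le
    nlinarith
  -- assemble
  set S := {y : Fin m → ℝ |
      (1 - ε) * σ ^ 2 ≤ (1 / m) * ∑ i, (y i) ^ 2 ∧
      (1 / m) * ∑ i, (y i) ^ 2 ≤ (1 + ε) * σ ^ 2} with hSdef
  have hmeas_sum : Measurable (fun y : Fin m → ℝ => ∑ i, (y i)^2) := by
    apply Finset.measurable_sum
    intro i _
    exact (measurable_pi_apply i).pow_const 2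
  have hS : MeasurableSet S := by
    apply MeasurableSet.inter
    · exact measurableSet_le measurable_const (measurable_const.mul hmeas_sum)
    · exact measurableSet_le (measurable_const.mul hmeas_sum) measurable_const
  have hsub : Sᶜ ⊆ {y : Fin m → ℝ | ∑ i, (y i)^2 ≤ (m:ℝ)*(1-ε)*σ^2}
      ∪ {y : Fin m → ℝ | (m:ℝ)*(1+ε)*σ^2 ≤ ∑ i, (y i)^2} := by
    intro y hy
    simp only [hSdef, Set.mem_compl_iff, Set.mem_setOf_eq, not_and_or, not_le] at hy
    rcases hy with hy | hy
    · left
      have : (1/(m:ℝ)) * ∑ i, (y i)^2 ≤ (1-ε)*σ^2 := hy.le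
      show ∑ i, (y i)^2 ≤ (m:ℝ)*(1-ε)*σ^2
      calc ∑ i, (y i)^2 = (m:ℝ) * ((1/(m:ℝ)) * ∑ i, (y i)^2) := by
            field_simp
        _ ≤ (m:ℝ) * ((1-ε)*σ^2) := by
            exact mul_le_mul_of_nonneg_left this hmpos.le
        _ = (m:ℝ)*(1-ε)*σ^2 := by ring
    · right
      have : (1+ε)*σ^2 ≤ (1/(m:ℝ)) * ∑ i, (y i)^2 := hy.le
      show (m:ℝ)*(1+ε)*σ^2 ≤ ∑ i, (y i)^2
      calc (m:ℝ)*(1+ε)*σ^2 = (m:ℝ) * ((1+ε)*σ^2) := by ring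
        _ ≤ (m:ℝ) * ((1/(m:ℝ)) * ∑ i, (y i)^2) := mul_le_mul_of_nonneg_left this hmpos.le
        _ = ∑ i, (y i)^2 := by field_simp
  have hco : P Sᶜ ≤ ENNReal.ofReal δ := by
    calc P Sᶜ ≤ P ({y : Fin m → ℝ | ∑ i, (y i)^2 ≤ (m:ℝ)*(1-ε)*σ^2}
          ∪ {y : Fin m → ℝ | (m:ℝ)*(1+ε)*σ^2 ≤ ∑ i, (y i)^2}) := measure_mono hsub
      _ ≤ P {y : Fin m → ℝ | ∑ i, (y i)^2 ≤ (m:ℝ)*(1-ε)*σ^2}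
          + P {y : Fin m → ℝ | (m:ℝ)*(1+ε)*σ^2 ≤ ∑ i, (y i)^2} := measure_union_le _ _
      _ ≤ ENNReal.ofReal (δ/2) + ENNReal.ofReal (δ/2) := by
          gcongr
          · rw [← ENNReal.ofReal_toReal (measure_ne_top P _)]
            exact ENNReal.ofReal_le_ofReal hlower
          · rw [← ENNReal.ofReal_toReal (measure_ne_top P _)]
            exact ENNReal.ofReal_le_ofReal hupper
      _ = ENNReal.ofReal δ := by
          rw [← ENNReal.ofReal_add (by linarith) (by linarith)]
          norm_num
  have htotal : P S + P Sᶜ = 1 := by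
    rw [measure_add_measure_compl hS]
    exact measure_univ
  have : ENNReal.ofReal (1-δ) + ENNReal.ofReal δ ≤ P S + ENNReal.ofReal δ := by
    rw [← ENNReal.ofReal_add (by linarith) (by linarith)]
    have h1 : ENNReal.ofReal (1 - δ + δ) = 1 := by norm_num
    rw [h1, ← htotal]
    exact add_le_add_right hco _
  exact ENNReal.le_of_add_le_add_right ENNReal.ofReal_ne_top this
end

section
/- For i = 1, …, m let Z_i = X_i · Y_i, where X₁, …, X_m, Y₁, …, Y_m are 2m mutually independent standard Gaussian random variables. Then for every ε ∈ (0, 1/2) and δ ∈ (0, 1/2), if m ≥ 32·log(2/δ)/ε², one has P(|(1/m)·Σ_{i=1}^m Z_i| > ε) ≤ δ. -/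
open MeasureTheory ProbabilityTheory Real

lemma gauss_withDensity :
    gaussianReal 0 1 = volume.withDensity fun x => ((gaussianPDFReal 0 1 x).toNNReal : ENNReal) := by
  rw [gaussianReal_of_var_ne_zero 0 one_ne_zero]
  rfl

lemma integral_gauss01 (f : ℝ → ℝ) :
    ∫ y, f y ∂(gaussianReal 0 1) = ∫ y, gaussianPDFReal 0 1 y * f y := by
  rw [gauss_withDensity, integral_withDensity_eq_integral_smul
    ((measurable_gaussianPDFReal 0 1).real_toNNReal)]
  congr 1; ext y
  simp [NNReal.smul_def, Real.coe_toNNReal _ (gaussianPDFReal_nonneg 0 1 y)]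

lemma integrable_gauss01 (f : ℝ → ℝ) :
    Integrable f (gaussianReal 0 1) ↔ Integrable (fun y => gaussianPDFReal 0 1 y * f y) volume := by
  rw [gauss_withDensity, integrable_withDensity_iff_integrable_smul
    ((measurable_gaussianPDFReal 0 1).real_toNNReal)]
  constructor <;> intro h <;> refine h.congr (Filter.Eventually.of_forall fun y => ?_) <;>
    simp [NNReal.smul_def, Real.coe_toNNReal _ (gaussianPDFReal_nonneg 0 1 y)]

lemma pdf_mul_exp (c y : ℝ) :
    gaussianPDFReal 0 1 y * Real.exp (c * y) = Real.exp (c ^ 2 / 2) * gaussianPDFReal c 1 y := by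
  simp only [gaussianPDFReal, NNReal.coe_one, mul_one, sub_zero]
  rw [mul_assoc, ← Real.exp_add, ← mul_assoc, mul_comm (Real.exp (c^2/2)), mul_assoc, ← Real.exp_add]
  ring_nf

lemma integrable_exp_mul_gauss (c : ℝ) :
    Integrable (fun y => Real.exp (c * y)) (gaussianReal 0 1) := by
  rw [integrable_gauss01]
  have : (fun y => gaussianPDFReal 0 1 y * Real.exp (c * y))
      = fun y => Real.exp (c ^ 2 / 2) * gaussianPDFReal c 1 y := by
    ext y; exact pdf_mul_exp c y
  rw [this]
  exact (integrable_gaussianPDFReal c 1).const_mul _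

lemma integral_exp_mul_gauss (c : ℝ) :
    ∫ y, Real.exp (c * y) ∂(gaussianReal 0 1) = Real.exp (c ^ 2 / 2) := by
  rw [integral_gauss01]
  simp_rw [pdf_mul_exp]
  rw [integral_const_mul, integral_gaussianPDFReal_eq_one c one_ne_zero, mul_one]

lemma pdf_mul_exp_sq (t x : ℝ) :
    gaussianPDFReal 0 1 x * Real.exp (t ^ 2 * x ^ 2 / 2)
      = (Real.sqrt (2 * π))⁻¹ * Real.exp (-((1 - t ^ 2) / 2) * x ^ 2) := by
  simp only [gaussianPDFReal, NNReal.coe_one, mul_one, sub_zero]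
  rw [mul_assoc, ← Real.exp_add]
  ring_nf

lemma integrable_exp_sq_gauss {t : ℝ} (ht : t ^ 2 < 1) :
    Integrable (fun x => Real.exp (t ^ 2 * x ^ 2 / 2)) (gaussianReal 0 1) := by
  rw [integrable_gauss01]
  have : (fun x => gaussianPDFReal 0 1 x * Real.exp (t ^ 2 * x ^ 2 / 2))
      = fun x => (Real.sqrt (2 * π))⁻¹ * Real.exp (-((1 - t ^ 2) / 2) * x ^ 2) := by
    ext x; exact pdf_mul_exp_sq t x
  rw [this]
  exact (integrable_exp_neg_mul_sq (by linarith)).const_mul _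

lemma integral_exp_sq_gauss {t : ℝ} (ht : t ^ 2 < 1) :
    ∫ x, Real.exp (t ^ 2 * x ^ 2 / 2) ∂(gaussianReal 0 1) = (Real.sqrt (1 - t ^ 2))⁻¹ := by
  rw [integral_gauss01]
  simp_rw [pdf_mul_exp_sq]
  rw [integral_const_mul, integral_gaussian]
  have h1 : (0:ℝ) < 1 - t ^ 2 := by linarith
  have hpi : (0:ℝ) < π := Real.pi_pos
  rw [show π / ((1 - t ^ 2) / 2) = (2 * π) / (1 - t ^ 2) by field_simp]
  rw [Real.sqrt_div (by positivity)]
  have h2 : Real.sqrt (2 * π) ≠ 0 := by positivity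
  field_simp

lemma integral_pi_gauss {m : ℕ} (f : Fin m → ℝ → ℝ) :
    ∫ x, (∏ i, f i (x i)) ∂(Measure.pi fun _ : Fin m => gaussianReal 0 1)
      = ∏ i, ∫ x, f i x ∂(gaussianReal 0 1) := by
  letI : MeasureSpace ℝ := ⟨gaussianReal 0 1⟩
  haveI : SigmaFinite (volume : Measure ℝ) := inferInstanceAs (SigmaFinite (gaussianReal 0 1))
  rw [show (Measure.pi fun _ : Fin m => gaussianReal 0 1) = (volume : Measure (Fin m → ℝ)) from
    volume_pi.symm]
  exact integral_fintype_prod_eq_prod f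

lemma integrable_pi_gauss {m : ℕ} (f : Fin m → ℝ → ℝ)
    (hf : ∀ i, Integrable (f i) (gaussianReal 0 1)) :
    Integrable (fun x => ∏ i, f i (x i)) (Measure.pi fun _ : Fin m => gaussianReal 0 1) := by
  letI : MeasureSpace ℝ := ⟨gaussianReal 0 1⟩
  haveI : SigmaFinite (volume : Measure ℝ) := inferInstanceAs (SigmaFinite (gaussianReal 0 1))
  rw [show (Measure.pi fun _ : Fin m => gaussianReal 0 1) = (volume : Measure (Fin m → ℝ)) from
    volume_pi.symm]
  exact Integrable.fintype_prod (𝕜 := ℝ) hf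

lemma exp_sum_eq {m : ℕ} (t : ℝ) (x y : Fin m → ℝ) :
    Real.exp (t * ∑ i, x i * y i) = ∏ i, Real.exp (t * x i * y i) := by
  rw [← Real.exp_sum, Finset.mul_sum]
  congr 1
  exact Finset.sum_congr rfl fun i _ => (mul_assoc _ _ _).symm

lemma meas_f {m : ℕ} (t : ℝ) :
    Measurable (fun p : (Fin m → ℝ) × (Fin m → ℝ) => Real.exp (t * ∑ i, p.1 i * p.2 i)) := by
  fun_prop

lemma slice_int {m : ℕ} (t : ℝ) (x : Fin m → ℝ) :
    Integrable (fun y => Real.exp (t * ∑ i, x i * y i))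
      (Measure.pi fun _ : Fin m => gaussianReal 0 1) := by
  have : (fun y : Fin m → ℝ => Real.exp (t * ∑ i, x i * y i))
      = fun y => ∏ i, Real.exp (t * x i * y i) := by
    ext y; exact exp_sum_eq t x y
  rw [this]
  exact integrable_pi_gauss _ fun i => integrable_exp_mul_gauss (t * x i)

lemma slice_integral {m : ℕ} (t : ℝ) (x : Fin m → ℝ) :
    ∫ y, Real.exp (t * ∑ i, x i * y i) ∂(Measure.pi fun _ : Fin m => gaussianReal 0 1)
      = ∏ i, Real.exp (t ^ 2 * (x i) ^ 2 / 2) := by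
  simp_rw [exp_sum_eq t x]
  rw [integral_pi_gauss fun i y => Real.exp (t * x i * y)]
  refine Finset.prod_congr rfl fun i _ => ?_
  rw [integral_exp_mul_gauss (t * x i)]
  ring_nf

lemma mgf_int {m : ℕ} {t : ℝ} (ht : t ^ 2 < 1) :
    Integrable (fun p : (Fin m → ℝ) × (Fin m → ℝ) => Real.exp (t * ∑ i, p.1 i * p.2 i))
      ((Measure.pi fun _ : Fin m => gaussianReal 0 1).prod
        (Measure.pi fun _ : Fin m => gaussianReal 0 1)) := by
  rw [integrable_prod_iff (meas_f t).aestronglyMeasurable]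
  refine ⟨Filter.Eventually.of_forall fun x => slice_int t x, ?_⟩
  have : (fun x : Fin m → ℝ => ∫ y, ‖Real.exp (t * ∑ i, x i * y i)‖
        ∂(Measure.pi fun _ : Fin m => gaussianReal 0 1))
      = fun x => ∏ i, Real.exp (t ^ 2 * (x i) ^ 2 / 2) := by
    ext x
    simp_rw [Real.norm_eq_abs, abs_of_pos (Real.exp_pos _)]
    exact slice_integral t x
  rw [this]
  exact integrable_pi_gauss _ fun i => integrable_exp_sq_gauss ht

lemma mgf_eq {m : ℕ} {t : ℝ} (ht : t ^ 2 < 1) :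
    ∫ p, Real.exp (t * ∑ i, p.1 i * p.2 i)
      ∂((Measure.pi fun _ : Fin m => gaussianReal 0 1).prod
        (Measure.pi fun _ : Fin m => gaussianReal 0 1))
      = ((Real.sqrt (1 - t ^ 2))⁻¹) ^ m := by
  rw [integral_prod _ (mgf_int ht)]
  have : (fun x : Fin m → ℝ => ∫ y, Real.exp (t * ∑ i, x i * y i)
        ∂(Measure.pi fun _ : Fin m => gaussianReal 0 1))
      = fun x => ∏ i, Real.exp (t ^ 2 * (x i) ^ 2 / 2) := by
    ext x; exact slice_integral t x
  rw [this, integral_pi_gauss fun _ x => Real.exp (t ^ 2 * x ^ 2 / 2)]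
  simp [integral_exp_sq_gauss ht]

/-- Let `Z_i = X_i·Y_i` for `2m` mutually independent standard Gaussians
`X_1,…,X_m,Y_1,…,Y_m`. For every `ε ∈ (0,1/2)` and `δ ∈ (0,1/2)`, if
`m ≥ 32·log(2/δ)/ε²` then `P(|(1/m)·∑ Z_i| > ε) ≤ δ`. -/
theorem product_gaussian_average_concentration (m : ℕ) (ε δ : ℝ)
    (hε0 : 0 < ε) (hε : ε < 1 / 2) (hδ0 : 0 < δ) (hδ : δ < 1 / 2)
    (hm : 32 * Real.log (2 / δ) / ε ^ 2 ≤ (m : ℝ)) :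
    ((Measure.pi fun _ : Fin m => gaussianReal 0 1).prod
        (Measure.pi fun _ : Fin m => gaussianReal 0 1))
      {p : (Fin m → ℝ) × (Fin m → ℝ) | ε < |(1 / m) * ∑ i, p.1 i * p.2 i|} ≤
      ENNReal.ofReal δ := by
  set μ := ((Measure.pi fun _ : Fin m => gaussianReal 0 1).prod
      (Measure.pi fun _ : Fin m => gaussianReal 0 1)) with hμ
  haveI : IsProbabilityMeasure μ := by rw [hμ]; infer_instance
  set X : (Fin m → ℝ) × (Fin m → ℝ) → ℝ := fun p => ∑ i, p.1 i * p.2 i with hX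
  set t : ℝ := ε / 2 with htdef
  have hε2 : (0:ℝ) < ε ^ 2 := by positivity
  have hlog : 0 < Real.log (2 / δ) := Real.log_pos (by rw [lt_div_iff₀ hδ0]; linarith)
  have hmpos : (0:ℝ) < m := lt_of_lt_of_le (by positivity) hm
  have ht0 : 0 ≤ t := by positivity
  have ht1 : t ^ 2 < 1 := by nlinarith
  have h1t : (0:ℝ) < 1 - t ^ 2 := by linarith
  set R : ℝ := ((Real.sqrt (1 - t ^ 2))⁻¹) ^ m with hR
  have hRpos : 0 < R := by positivity
  -- mgf values
  have hmgf1 : mgf X μ t = R := by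
    simp only [ProbabilityTheory.mgf, hμ, hX, hR]
    exact mgf_eq ht1
  have hmgf2 : mgf X μ (-t) = R := by
    simp only [ProbabilityTheory.mgf, hμ, hX, hR]
    have := mgf_eq (m := m) (t := -t) (by rwa [neg_pow, Even.neg_one_pow (by norm_num), one_mul])
    rw [this, neg_pow, Even.neg_one_pow (by norm_num : Even 2), one_mul]
  set b : ℝ := Real.exp (-(t * (m * ε))) * R with hb
  have hbpos : 0 < b := by positivity
  -- Chernoff bounds
  have hint1 : Integrable (fun p => Real.exp (t * X p)) μ := mgf_int ht1
  have hint2 : Integrable (fun p => Real.exp (-t * X p)) μ :=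
    mgf_int (by rwa [neg_pow, Even.neg_one_pow (by norm_num : Even 2), one_mul])
  have hch1 : (μ {p | (m:ℝ) * ε ≤ X p}).toReal ≤ b := by
    have := measure_ge_le_exp_mul_mgf (X := X) (μ := μ) ((m:ℝ) * ε) ht0 hint1
    rw [hmgf1] at this
    calc (μ {p | (m:ℝ) * ε ≤ X p}).toReal ≤ Real.exp (-t * ((m:ℝ) * ε)) * R := this
      _ = b := by rw [hb]; ring_nf
  have hch2 : (μ {p | X p ≤ -((m:ℝ) * ε)}).toReal ≤ b := by
    have := measure_le_le_exp_mul_mgf (X := X) (μ := μ) (-((m:ℝ) * ε))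
      (neg_nonpos.mpr ht0) hint2
    rw [hmgf2] at this
    calc (μ {p | X p ≤ -((m:ℝ) * ε)}).toReal ≤ Real.exp (- -t * -((m:ℝ) * ε)) * R := this
      _ = b := by rw [hb]; ring_nf
  -- inclusion
  have hsub : {p : (Fin m → ℝ) × (Fin m → ℝ) | ε < |(1 / m) * ∑ i, p.1 i * p.2 i|}
      ⊆ {p | (m:ℝ) * ε ≤ X p} ∪ {p | X p ≤ -((m:ℝ) * ε)} := by
    intro p hp
    simp only [Set.mem_setOf_eq] at hp
    have habs : (m:ℝ) * ε < |X p| := by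
      have h1 : |(1 / (m:ℝ)) * X p| = |X p| / m := by
        rw [abs_mul, abs_of_pos (by positivity : (0:ℝ) < 1 / (m:ℝ))]
        field_simp
      rw [h1, lt_div_iff₀ hmpos] at hp
      linarith [hp]
    rcases lt_abs.mp habs with h | h
    · exact Or.inl h.le
    · exact Or.inr (by simp only [Set.mem_setOf_eq]; linarith)
  -- combine
  have hfin1 : μ {p | (m:ℝ) * ε ≤ X p} ≠ ⊤ := measure_ne_top _ _
  have hfin2 : μ {p | X p ≤ -((m:ℝ) * ε)} ≠ ⊤ := measure_ne_top _ _
  have hkey : b + b ≤ δ := by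
    have hRle : R ≤ Real.exp ((m:ℝ) * t ^ 2) := by
      have hR1 : (Real.sqrt (1 - t ^ 2))⁻¹ ≤ Real.exp (t ^ 2) := by
        have h2 : (1 - t ^ 2)⁻¹ ≤ Real.exp (t ^ 2) ^ 2 := by
          have e1 : Real.exp (t ^ 2) ^ 2 = Real.exp (2 * t ^ 2) := by
            rw [← Real.exp_nat_mul]; norm_num [mul_comm]
          have e2 : 2 * t ^ 2 + 1 ≤ Real.exp (2 * t ^ 2) := Real.add_one_le_exp _
          have e3 : (1 - t ^ 2)⁻¹ ≤ 1 + 2 * t ^ 2 := by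
            have ht116 : t ^ 2 ≤ 1 / 16 := by nlinarith
            rw [← one_div, div_le_iff₀ h1t]; nlinarith [sq_nonneg t, ht116]
          rw [e1]; linarith
        calc (Real.sqrt (1 - t ^ 2))⁻¹ = Real.sqrt ((1 - t ^ 2)⁻¹) := (Real.sqrt_inv _).symm
          _ ≤ Real.sqrt (Real.exp (t ^ 2) ^ 2) := Real.sqrt_le_sqrt h2
          _ = Real.exp (t ^ 2) := Real.sqrt_sq (Real.exp_pos _).le
      calc R ≤ (Real.exp (t ^ 2)) ^ m := by
            exact pow_le_pow_left₀ (by positivity) hR1 m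
        _ = Real.exp ((m:ℝ) * t ^ 2) := by rw [← Real.exp_nat_mul]
    have hble : b ≤ Real.exp (-(m * ε ^ 2) / 4) := by
      calc b ≤ Real.exp (-(t * (m * ε))) * Real.exp ((m:ℝ) * t ^ 2) := by
            exact mul_le_mul_of_nonneg_left hRle (Real.exp_pos _).le
        _ = Real.exp (-(t * (m * ε)) + (m:ℝ) * t ^ 2) := (Real.exp_add _ _).symm
        _ = Real.exp (-(m * ε ^ 2) / 4) := by rw [htdef]; ring_nf
    have hexp : Real.exp (-(m * ε ^ 2) / 4) ≤ δ / 2 := by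
      have h32 : 32 * Real.log (2 / δ) ≤ (m:ℝ) * ε ^ 2 := by
        rw [div_le_iff₀ hε2] at hm; linarith
      have : -(m * ε ^ 2) / 4 ≤ Real.log (δ / 2) := by
        rw [show (δ / 2 : ℝ) = (2 / δ)⁻¹ by field_simp, Real.log_inv]
        linarith
      calc Real.exp (-(m * ε ^ 2) / 4) ≤ Real.exp (Real.log (δ / 2)) := Real.exp_le_exp.mpr this
        _ = δ / 2 := Real.exp_log (by positivity)
    linarith
  calc μ {p : (Fin m → ℝ) × (Fin m → ℝ) | ε < |(1 / m) * ∑ i, p.1 i * p.2 i|}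
      ≤ μ ({p | (m:ℝ) * ε ≤ X p} ∪ {p | X p ≤ -((m:ℝ) * ε)}) := measure_mono hsub
    _ ≤ μ {p | (m:ℝ) * ε ≤ X p} + μ {p | X p ≤ -((m:ℝ) * ε)} := measure_union_le _ _
    _ ≤ ENNReal.ofReal b + ENNReal.ofReal b := by
        gcongr
        · exact (ENNReal.le_ofReal_iff_toReal_le hfin1 hbpos.le).mpr hch1
        · exact (ENNReal.le_ofReal_iff_toReal_le hfin2 hbpos.le).mpr hch2
    _ = ENNReal.ofReal (b + b) := (ENNReal.ofReal_add hbpos.le hbpos.le).symm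
    _ ≤ ENNReal.ofReal δ := ENNReal.ofReal_le_ofReal hkey
end

section
/- Let b > 0 and let γ = (gaussianReal 0 1) × (gaussianReal 0 1) be the standard Gaussian product measure on ℝ². Let μ be the pushforward of γ under the map (u, v) ↦ (u, b·u + v) (the law of a pair (Y, Z) generated by the two-node DAG Y → Z with edge weight b and unit-variance noise), and let ν be the pushforward of γ under the map (u, v) ↦ (b·u + v, u) (the law obtained by reversing the edge). Then the Kullback–Leibler divergence satisfies KL(μ ‖ ν) = b⁴/2. -/
open MeasureTheory ProbabilityTheory Real
open scoped Classical
open scoped ENNReal NNReal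

/-- The Kullback–Leibler divergence `KL(μ ‖ ν) = ∫ log(dμ/dν) dμ`, valued in `ℝ≥0∞`
(`∞` unless `μ ≪ ν` and the log-likelihood ratio is `μ`-integrable). -/
noncomputable def klDiv {α : Type*} [MeasurableSpace α] (μ ν : Measure α) : ENNReal :=
  if μ ≪ ν ∧ Integrable (llr μ ν) μ then ENNReal.ofReal (∫ x, llr μ ν x ∂μ) else ⊤


section Aux

/-- The shear `(u,v) ↦ (u, b u + v)` as a measurable equivalence. -/
noncomputable def shearME (b : ℝ) : (ℝ × ℝ) ≃ᵐ (ℝ × ℝ) where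
  toFun p := (p.1, b * p.1 + p.2)
  invFun p := (p.1, p.2 - b * p.1)
  left_inv p := by simp
  right_inv p := by simp
  measurable_toFun := measurable_fst.prodMk ((measurable_fst.const_mul b).add measurable_snd)
  measurable_invFun := measurable_fst.prodMk (measurable_snd.sub (measurable_fst.const_mul b))

noncomputable def revME (b : ℝ) : (ℝ × ℝ) ≃ᵐ (ℝ × ℝ) :=
  (shearME b).trans (MeasurableEquiv.prodComm : (ℝ × ℝ) ≃ᵐ (ℝ × ℝ))

lemma shearME_apply (b : ℝ) (p : ℝ × ℝ) : shearME b p = (p.1, b * p.1 + p.2) := by rfl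
lemma revME_apply (b : ℝ) (p : ℝ × ℝ) : revME b p = (b * p.1 + p.2, p.1) := by rfl
lemma shearME_symm_apply (b : ℝ) (p : ℝ × ℝ) : (shearME b).symm p = (p.1, p.2 - b * p.1) := by rfl
lemma revME_symm_apply (b : ℝ) (p : ℝ × ℝ) : (revME b).symm p = (p.2, p.1 - b * p.2) := by rfl

lemma measurePreserving_shearME (b : ℝ) :
    MeasurePreserving (shearME b) ((volume : Measure ℝ).prod volume)
      ((volume : Measure ℝ).prod volume) :=
  MeasurePreserving.skew_product (MeasurePreserving.id volume)
    (show Measurable (Function.uncurry fun (a c : ℝ) => b * a + c) from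
      (measurable_fst.const_mul b).add measurable_snd)
    (Filter.Eventually.of_forall fun a => map_add_left_eq_self volume (b * a))

lemma measurePreserving_revME (b : ℝ) :
    MeasurePreserving (revME b) ((volume : Measure ℝ).prod volume)
      ((volume : Measure ℝ).prod volume) :=
  (Measure.measurePreserving_swap).comp (measurePreserving_shearME b)

lemma map_withDensity_equiv {α β : Type*} [MeasurableSpace α] [MeasurableSpace β]
    {μ : Measure α} {ν : Measure β} (e : α ≃ᵐ β) (he : MeasurePreserving e μ ν)
    {g : α → ℝ≥0∞} :
    (μ.withDensity g).map e = ν.withDensity (g ∘ e.symm) := by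
  ext s hs
  rw [Measure.map_apply e.measurable hs, withDensity_apply _ (e.measurable hs),
    withDensity_apply _ hs]
  have h := he.setLIntegral_comp_preimage_emb e.measurableEmbedding (g ∘ e.symm) s
  simpa [Function.comp] using h

end Aux

lemma integrable_sq_exp : Integrable (fun x : ℝ => x ^ 2 * rexp (-(1/2) * x ^ 2)) := by
  have h := integrable_rpow_mul_exp_neg_mul_sq (by norm_num : (0:ℝ) < 1/2)
    (by norm_num : (-1:ℝ) < 2)
  refine h.congr (Filter.Eventually.of_forall fun x => ?_)
  simp only [show ((2:ℝ)) = ((2:ℕ):ℝ) by norm_num, Real.rpow_natCast]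
  try norm_num

lemma integral_sq_exp : ∫ x : ℝ, x ^ 2 * rexp (-(1/2) * x ^ 2) = Real.sqrt (2 * π) := by
  have hu : ∀ x : ℝ, HasDerivAt (fun y : ℝ => y) 1 x := fun x => hasDerivAt_id x
  have hv : ∀ x : ℝ, HasDerivAt (fun y : ℝ => -rexp (-(1/2) * y ^ 2))
      (x * rexp (-(1/2) * x ^ 2)) x := by
    intro x
    have h1 : HasDerivAt (fun y : ℝ => -(1/2) * y ^ 2) (-(1/2) * (2 * x ^ 1)) x :=
      (hasDerivAt_pow 2 x).const_mul _
    have h2 : HasDerivAt (fun y : ℝ => -rexp (-(1/2) * y ^ 2)) _ x := (h1.exp).neg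
    convert h2 using 1
    ring
  have huv' : Integrable ((fun y : ℝ => y) * fun x => x * rexp (-(1/2) * x ^ 2)) := by
    refine integrable_sq_exp.congr (Filter.Eventually.of_forall fun x => ?_)
    simp [Pi.mul_apply]; ring
  have hu'v : Integrable ((fun _ : ℝ => (1:ℝ)) * fun y : ℝ => -rexp (-(1/2) * y ^ 2)) := by
    refine ((integrable_exp_neg_mul_sq (by norm_num : (0:ℝ) < 1/2)).neg).congr
      (Filter.Eventually.of_forall fun x => ?_)
    simp [Pi.mul_apply]
    try ring
  have huv : Integrable ((fun y : ℝ => y) * fun y : ℝ => -rexp (-(1/2) * y ^ 2)) := by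
    refine ((integrable_mul_exp_neg_mul_sq (by norm_num : (0:ℝ) < 1/2)).neg).congr
      (Filter.Eventually.of_forall fun x => ?_)
    simp [Pi.mul_apply]
    try ring
  have key := integral_mul_deriv_eq_deriv_mul_of_integrable (fun x _ => hu x) (fun x _ => hv x) huv' hu'v huv
  -- key : ∫ x, x * (x * exp ..) = - ∫ x, 1 * (-exp ..)
  have h2 : ∫ x : ℝ, x * (x * rexp (-(1/2) * x ^ 2)) = ∫ x : ℝ, x ^ 2 * rexp (-(1/2) * x ^ 2) := by
    congr 1; funext x; ring
  have h3 : ∫ x : ℝ, (1:ℝ) * -rexp (-(1/2) * x ^ 2) = - ∫ x : ℝ, rexp (-(1/2) * x ^ 2) := by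
    rw [← integral_neg]
    congr 1; funext x; ring
  rw [h2, h3] at key
  rw [key, neg_neg, integral_gaussian, show (π/(1/2)) = 2*π by ring]

lemma gaussianPDFReal_std (x : ℝ) :
    gaussianPDFReal 0 1 x = (Real.sqrt (2 * π))⁻¹ * rexp (-(1/2) * x ^ 2) := by
  simp only [gaussianPDFReal, NNReal.coe_one, mul_one, sub_zero]
  congr 1
  ring_nf

lemma integral_gaussianReal_eq (g : ℝ → ℝ) :
    ∫ x, g x ∂(gaussianReal 0 1) = ∫ x, gaussianPDFReal 0 1 x * g x := by
  rw [gaussianReal_of_var_ne_zero 0 one_ne_zero]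
  have hmeas : Measurable fun x => (gaussianPDFReal 0 1 x).toNNReal :=
    (measurable_gaussianPDFReal 0 1).real_toNNReal
  have hd : gaussianPDF 0 1 = fun x => ((gaussianPDFReal 0 1 x).toNNReal : ℝ≥0∞) := rfl
  rw [hd, integral_withDensity_eq_integral_smul hmeas]
  congr 1
  funext x
  rw [NNReal.smul_def, smul_eq_mul, Real.coe_toNNReal _ (gaussianPDFReal_nonneg 0 1 x)]

lemma integrable_gaussianReal_iff (g : ℝ → ℝ) :
    Integrable g (gaussianReal 0 1) ↔ Integrable (fun x => g x * gaussianPDFReal 0 1 x) := by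
  rw [gaussianReal_of_var_ne_zero 0 one_ne_zero]
  rw [integrable_withDensity_iff (measurable_gaussianPDF 0 1)
    (Filter.Eventually.of_forall fun x => ENNReal.ofReal_lt_top)]
  constructor <;> intro h <;> refine h.congr (Filter.Eventually.of_forall fun x => ?_) <;>
    simp only [gaussianPDF_def, ENNReal.toReal_ofReal (gaussianPDFReal_nonneg 0 1 x)]

lemma integrable_sq_gaussian : Integrable (fun x : ℝ => x ^ 2) (gaussianReal 0 1) := by
  rw [integrable_gaussianReal_iff]
  have h := integrable_sq_exp.const_mul (Real.sqrt (2 * π))⁻¹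
  refine h.congr (Filter.Eventually.of_forall fun x => ?_)
  simp only [gaussianPDFReal_std]; ring

lemma integrable_id_gaussian : Integrable (fun x : ℝ => x) (gaussianReal 0 1) := by
  rw [integrable_gaussianReal_iff]
  have h := ((integrable_mul_exp_neg_mul_sq (by norm_num : (0:ℝ) < 1/2)).const_mul
    (Real.sqrt (2 * π))⁻¹)
  refine h.congr (Filter.Eventually.of_forall fun x => ?_)
  simp only [gaussianPDFReal_std]; ring

lemma moment_two_gaussian : ∫ x, x ^ 2 ∂(gaussianReal 0 1) = 1 := by
  rw [integral_gaussianReal_eq]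
  have : ∀ x : ℝ, gaussianPDFReal 0 1 x * x ^ 2
      = (Real.sqrt (2 * π))⁻¹ * (x ^ 2 * rexp (-(1/2) * x ^ 2)) := by
    intro x; rw [gaussianPDFReal_std]; ring
  simp_rw [this]
  rw [integral_const_mul, integral_sq_exp, inv_mul_cancel₀]
  positivity

lemma moment_one_gaussian : ∫ x, x ∂(gaussianReal 0 1) = 0 := by
  rw [integral_gaussianReal_eq]
  have : ∀ x : ℝ, gaussianPDFReal 0 1 x * x
      = (Real.sqrt (2 * π))⁻¹ * (x * rexp (-(1/2) * x ^ 2)) := by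
    intro x; rw [gaussianPDFReal_std]; ring
  simp_rw [this]
  rw [integral_const_mul]
  have hodd : ∫ x : ℝ, x * rexp (-(1/2) * x ^ 2) = 0 := by
    have h := integral_neg_eq_self (fun x : ℝ => x * rexp (-(1/2) * x ^ 2)) volume
    simp only [neg_mul, neg_sq, integral_neg] at h
    simp only [neg_mul]
    linarith [h]
  rw [hodd, mul_zero]
lemma gaussian_prod_eq :
    (gaussianReal 0 1).prod (gaussianReal 0 1)
      = ((volume : Measure ℝ).prod volume).withDensity
          (fun p => gaussianPDF 0 1 p.1 * gaussianPDF 0 1 p.2) := by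
  refine Measure.prod_eq fun s t hs ht => ?_
  rw [withDensity_apply _ (hs.prod ht), ← Measure.prod_restrict,
    lintegral_prod_mul (measurable_gaussianPDF 0 1).aemeasurable
      (measurable_gaussianPDF 0 1).aemeasurable,
    gaussianReal_apply 0 one_ne_zero s, gaussianReal_apply 0 one_ne_zero t]

lemma pdf_real_factor (b y z : ℝ) :
    gaussianPDFReal 0 1 y * gaussianPDFReal 0 1 (z - b * y)
      = gaussianPDFReal 0 1 z * gaussianPDFReal 0 1 (y - b * z)
          * rexp (b ^ 2 * (z ^ 2 - y ^ 2) / 2) := by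
  simp only [gaussianPDFReal_std]
  have key : rexp (-(1/2) * y ^ 2) * rexp (-(1/2) * (z - b*y) ^ 2)
      = rexp (-(1/2) * z ^ 2) * (rexp (-(1/2) * (y - b*z) ^ 2)
          * rexp (b ^ 2 * (z ^ 2 - y ^ 2) / 2)) := by
    rw [← Real.exp_add, ← Real.exp_add, ← Real.exp_add]
    congr 1
    ring
  set c : ℝ := (Real.sqrt (2 * π))⁻¹ with hc
  calc c * rexp (-(1/2) * y ^ 2) * (c * rexp (-(1/2) * (z - b*y) ^ 2))
      = c * c * (rexp (-(1/2) * y ^ 2) * rexp (-(1/2) * (z - b*y) ^ 2)) := by ring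
    _ = c * c * (rexp (-(1/2) * z ^ 2) * (rexp (-(1/2) * (y - b*z) ^ 2)
          * rexp (b ^ 2 * (z ^ 2 - y ^ 2) / 2))) := by rw [key]
    _ = c * rexp (-(1/2) * z ^ 2) * (c * rexp (-(1/2) * (y - b*z) ^ 2))
          * rexp (b ^ 2 * (z ^ 2 - y ^ 2) / 2) := by ring

lemma pdf_ennreal_factor (b y z : ℝ) :
    gaussianPDF 0 1 y * gaussianPDF 0 1 (z - b * y)
      = gaussianPDF 0 1 z * gaussianPDF 0 1 (y - b * z)
          * ENNReal.ofReal (rexp (b ^ 2 * (z ^ 2 - y ^ 2) / 2)) := by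
  simp only [gaussianPDF_def]
  rw [← ENNReal.ofReal_mul (gaussianPDFReal_nonneg 0 1 y),
    ← ENNReal.ofReal_mul (gaussianPDFReal_nonneg 0 1 z),
    ← ENNReal.ofReal_mul (mul_nonneg (gaussianPDFReal_nonneg 0 1 z)
        (gaussianPDFReal_nonneg 0 1 (y - b * z))),
    pdf_real_factor b y z, mul_assoc]

/-- Let `μ` be the law of `(Y, Z)` with `Y = ε₁`, `Z = b·Y + ε₂`
(edge `Y → Z` of weight `b`, unit-variance noise), and `ν` the law of the reversed-edge
model, i.e. the pushforward of the standard Gaussian product under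
`(u,v) ↦ (b·u + v, u)`. Then `KL(μ ‖ ν) = b⁴/2`. -/

theorem klDiv_two_node_edge_reversal (b : ℝ) (hb : 0 < b) :
    klDiv
      (Measure.map (fun p : ℝ × ℝ => (p.1, b * p.1 + p.2))
        ((gaussianReal 0 1).prod (gaussianReal 0 1)))
      (Measure.map (fun p : ℝ × ℝ => (b * p.1 + p.2, p.1))
        ((gaussianReal 0 1).prod (gaussianReal 0 1))) =
      ENNReal.ofReal (b ^ 4 / 2) := by
  set γ2 : Measure (ℝ × ℝ) := (gaussianReal 0 1).prod (gaussianReal 0 1) with hγ2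
  set P : Measure (ℝ × ℝ) := (volume : Measure ℝ).prod volume with hP
  set D : ℝ × ℝ → ℝ≥0∞ := fun p => gaussianPDF 0 1 p.1 * gaussianPDF 0 1 p.2 with hD
  set μ : Measure (ℝ × ℝ) :=
    Measure.map (fun p : ℝ × ℝ => (p.1, b * p.1 + p.2)) γ2 with hμdef
  set ν : Measure (ℝ × ℝ) :=
    Measure.map (fun p : ℝ × ℝ => (b * p.1 + p.2, p.1)) γ2 with hνdef
  set h : ℝ × ℝ → ℝ≥0∞ :=
    fun q => ENNReal.ofReal (rexp (b ^ 2 * (q.2 ^ 2 - q.1 ^ 2) / 2)) with hh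
  set L : ℝ × ℝ → ℝ := fun q => b ^ 2 * (q.2 ^ 2 - q.1 ^ 2) / 2 with hL
  have hTmeas : Measurable (fun p : ℝ × ℝ => (p.1, b * p.1 + p.2)) :=
    (shearME b).measurable
  have hSmeas : Measurable (fun p : ℝ × ℝ => (b * p.1 + p.2, p.1)) :=
    (revME b).measurable
  have hG_meas : Measurable (D ∘ (revME b).symm) :=
    ((measurable_gaussianPDF 0 1).comp measurable_snd).mul
      ((measurable_gaussianPDF 0 1).comp (measurable_fst.sub (measurable_snd.const_mul b)))
  have hh_meas : Measurable h := by
    apply Measurable.ennreal_ofReal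
    apply Measurable.exp
    fun_prop
  have hμ : μ = P.withDensity (D ∘ (shearME b).symm) := by
    rw [hμdef, show (fun p : ℝ × ℝ => (p.1, b * p.1 + p.2)) = ⇑(shearME b) from rfl,
      hγ2, gaussian_prod_eq, map_withDensity_equiv _ (measurePreserving_shearME b)]
  have hν : ν = P.withDensity (D ∘ (revME b).symm) := by
    rw [hνdef, show (fun p : ℝ × ℝ => (b * p.1 + p.2, p.1)) = ⇑(revME b) from rfl,
      hγ2, gaussian_prod_eq, map_withDensity_equiv _ (measurePreserving_revME b)]
  have hfact : (D ∘ (shearME b).symm) = fun q => (D ∘ (revME b).symm) q * h q := by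
    funext q
    show D ((shearME b).symm q) = D ((revME b).symm q) * h q
    rw [shearME_symm_apply, revME_symm_apply]
    exact pdf_ennreal_factor b q.1 q.2
  have hμν : μ = ν.withDensity h := by
    rw [hμ, hfact, hν, ← withDensity_mul _ hG_meas hh_meas]
    rfl
  have hνprob : IsProbabilityMeasure ν := Measure.isProbabilityMeasure_map hSmeas.aemeasurable
  have hac : μ ≪ ν := by
    rw [hμν]; exact withDensity_absolutelyContinuous _ _
  have hrn : μ.rnDeriv ν =ᵐ[ν] h := by
    rw [hμν]; exact Measure.rnDeriv_withDensity ν hh_meas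
  have hrnμ : μ.rnDeriv ν =ᵐ[μ] h := hac.ae_le hrn
  have hllr : llr μ ν =ᵐ[μ] L := by
    filter_upwards [hrnμ] with q hq
    rw [llr_def]
    simp only [hq, hh, ENNReal.toReal_ofReal (Real.exp_nonneg _), Real.log_exp, hL]
  have hsq1 : Integrable (fun z : ℝ × ℝ => z.1 ^ 2 * (1 : ℝ)) γ2 :=
    integrable_sq_gaussian.mul_prod (integrable_const 1)
  have hxy : Integrable (fun z : ℝ × ℝ => z.1 * z.2) γ2 :=
    integrable_id_gaussian.mul_prod integrable_id_gaussian
  have hsq2 : Integrable (fun z : ℝ × ℝ => (1 : ℝ) * z.2 ^ 2) γ2 :=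
    (integrable_const (1:ℝ)).mul_prod integrable_sq_gaussian
  have hcomp : Integrable (fun p : ℝ × ℝ => b ^ 2 * ((b * p.1 + p.2) ^ 2 - p.1 ^ 2) / 2) γ2 := by
    have hI := ((hsq1.const_mul (b ^ 2 * (b ^ 2 - 1) / 2)).add
      ((hxy.const_mul (b ^ 3)).add (hsq2.const_mul (b ^ 2 / 2))))
    refine hI.congr (Filter.Eventually.of_forall fun p => ?_)
    simp only [Pi.add_apply]
    ring
  have hLas : AEStronglyMeasurable L μ := by
    apply Measurable.aestronglyMeasurable
    fun_prop
  have hLint : Integrable L μ := by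
    rw [hμdef]
    rw [integrable_map_measure (by rw [← hμdef]; exact hLas) hTmeas.aemeasurable]
    exact hcomp
  have hInt : Integrable (llr μ ν) μ := hLint.congr hllr.symm
  have hval : ∫ q, L q ∂μ = b ^ 4 / 2 := by
    rw [hμdef, integral_map hTmeas.aemeasurable (by rw [← hμdef]; exact hLas)]
    have e : (fun p : ℝ × ℝ => L (p.1, b * p.1 + p.2))
        = fun p : ℝ × ℝ => (b ^ 2 * (b ^ 2 - 1) / 2) * (p.1 ^ 2 * (1 : ℝ))
            + ((b ^ 3) * (p.1 * p.2) + (b ^ 2 / 2) * ((1 : ℝ) * p.2 ^ 2)) := by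
      funext p
      simp only [hL]
      ring
    rw [show (fun p : ℝ × ℝ => L ((fun p : ℝ × ℝ => (p.1, b * p.1 + p.2)) p))
        = fun p : ℝ × ℝ => L (p.1, b * p.1 + p.2) from rfl, e]
    have hadd23 : Integrable (fun z : ℝ × ℝ => (b ^ 3) * (z.1 * z.2)
        + (b ^ 2 / 2) * ((1 : ℝ) * z.2 ^ 2)) γ2 :=
      (hxy.const_mul _).add (hsq2.const_mul _)
    rw [integral_add (hsq1.const_mul _) hadd23,
      integral_add (hxy.const_mul _) (hsq2.const_mul _),
      integral_const_mul, integral_const_mul, integral_const_mul, hγ2,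
      integral_prod_mul (fun x : ℝ => x ^ 2) (fun _ : ℝ => (1 : ℝ)),
      integral_prod_mul (fun x : ℝ => x) (fun x : ℝ => x),
      integral_prod_mul (fun _ : ℝ => (1 : ℝ)) (fun x : ℝ => x ^ 2),
      moment_two_gaussian, moment_one_gaussian]
    simp
    ring
  rw [klDiv, if_pos ⟨hac, hInt⟩, integral_congr_ae hllr, hval]
end

section
/- Let b > 0 and let γ be the three-fold product of gaussianReal 0 1 on ℝ³. Define f(e₁, e₂, e₃) = (e₁, b·e₁ + e₂, b²·e₁ + b·e₂ + e₃), the law of (X, Y, Z) generated by the equal-variance chain DAG X → Y → Z with both edge weights b. Define g(e₁, e₂, e₃) = (X', Y', Z') by X' = e₁, Z' = b²·e₁ + √(1+b²)·e₂, Y' = (b/(1+b²))·X' + (b/(1+b²))·Z' + (1/√(1+b²))·e₃, the law generated by the DAG X' → Z', X' → Y', Z' → Y' with unequal noise variances 1, 1+b², 1/(1+b²). Then the pushforward measures coincide: map f γ = map g γ. (Hence two DAGs in different Markov equivalence classes induce the same Gaussian distribution when the equal-variance assumption is dropped.) -/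
open MeasureTheory ProbabilityTheory Real ENNReal

lemma gaussian_prod_withDensity :
    (gaussianReal 0 1).prod (gaussianReal 0 1)
      = (volume : Measure (ℝ × ℝ)).withDensity
          (fun p => gaussianPDF 0 1 p.1 * gaussianPDF 0 1 p.2) := by
  refine Measure.prod_eq fun s t hs ht => ?_
  rw [Measure.volume_eq_prod, withDensity_apply _ (hs.prod ht), ← Measure.prod_restrict,
    lintegral_prod_mul (measurable_gaussianPDF 0 1).aemeasurable
      (measurable_gaussianPDF 0 1).aemeasurable,
    gaussianReal_of_var_ne_zero 0 one_ne_zero, withDensity_apply _ hs, withDensity_apply _ ht]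

lemma pdf_rot_invariant {a c : ℝ} (hac : a ^ 2 + c ^ 2 = 1) (x y : ℝ) :
    gaussianPDF 0 1 (a * x + c * y) * gaussianPDF 0 1 (c * x - a * y)
      = gaussianPDF 0 1 x * gaussianPDF 0 1 y := by
  have key : ∀ u w : ℝ, gaussianPDF 0 1 u * gaussianPDF 0 1 w
      = ENNReal.ofReal ((Real.sqrt (2 * π * 1))⁻¹ * (Real.sqrt (2 * π * 1))⁻¹
          * rexp (-(u ^ 2 + w ^ 2) / 2)) := by
    intro u w
    rw [gaussianPDF, gaussianPDF, ← ENNReal.ofReal_mul (gaussianPDFReal_nonneg 0 1 u)]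
    congr 1
    simp only [gaussianPDFReal, sub_zero, NNReal.coe_one, mul_one]
    rw [show -(u ^ 2 + w ^ 2) / 2 = -u ^ 2 / 2 + -w ^ 2 / 2 by ring, Real.exp_add]
    ring
  have harg : (a * x + c * y) ^ 2 + (c * x - a * y) ^ 2 = x ^ 2 + y ^ 2 := by
    linear_combination (x ^ 2 + y ^ 2) * hac
  rw [key, key, harg]

lemma map_rot {a c : ℝ} (hac : a ^ 2 + c ^ 2 = 1) :
    Measure.map (fun p : ℝ × ℝ => (a * p.1 + c * p.2, c * p.1 - a * p.2))
        ((gaussianReal 0 1).prod (gaussianReal 0 1))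
      = (gaussianReal 0 1).prod (gaussianReal 0 1) := by
  set R : (ℝ × ℝ) →ₗ[ℝ] ℝ × ℝ :=
    Matrix.toLin (Module.Basis.finTwoProd ℝ) (Module.Basis.finTwoProd ℝ) !![a, c; c, -a] with hRdef
  have hRfun : ⇑R = fun p : ℝ × ℝ => (a * p.1 + c * p.2, c * p.1 - a * p.2) := by
    funext p
    rw [hRdef, Matrix.toLin_finTwoProd_apply]
    ring_nf
  have hmeas : Measurable (fun p : ℝ × ℝ => (a * p.1 + c * p.2, c * p.1 - a * p.2)) := by
    fun_prop
  have hdet : LinearMap.det R = -1 := by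
    rw [hRdef, LinearMap.det_toLin, Matrix.det_fin_two_of]
    linear_combination -hac
  have hvol : Measure.map (fun p : ℝ × ℝ => (a * p.1 + c * p.2, c * p.1 - a * p.2))
      (volume : Measure (ℝ × ℝ)) = volume := by
    have h := Measure.map_linearMap_addHaar_eq_smul_addHaar (volume : Measure (ℝ × ℝ))
      (f := R) (by rw [hdet]; norm_num)
    rw [hdet, hRfun, show ((-1 : ℝ))⁻¹ = -1 by norm_num, abs_neg, abs_one,
      ENNReal.ofReal_one, one_smul] at h
    exact h
  have hdens : Measurable (fun p : ℝ × ℝ => gaussianPDF 0 1 p.1 * gaussianPDF 0 1 p.2) := by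
    exact ((measurable_gaussianPDF 0 1).comp measurable_fst).mul
      ((measurable_gaussianPDF 0 1).comp measurable_snd)
  rw [gaussian_prod_withDensity]
  ext s hs
  have hchg : ∫⁻ p in s, gaussianPDF 0 1 p.1 * gaussianPDF 0 1 p.2 ∂(volume : Measure (ℝ × ℝ))
      = ∫⁻ p in (fun p : ℝ × ℝ => (a * p.1 + c * p.2, c * p.1 - a * p.2)) ⁻¹' s,
          gaussianPDF 0 1 (a * p.1 + c * p.2) * gaussianPDF 0 1 (c * p.1 - a * p.2)
          ∂(volume : Measure (ℝ × ℝ)) := by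
    conv_lhs => rw [← hvol]
    rw [setLIntegral_map hs hdens hmeas]
  rw [Measure.map_apply hmeas hs, withDensity_apply _ (hmeas hs), withDensity_apply _ hs, hchg]
  refine setLIntegral_congr_fun (hmeas hs) (fun p _ => ?_)
  exact (pdf_rot_invariant hac p.1 p.2).symm

/-- The equal-variance chain DAG `X → Y → Z` with both edge weights `b`
and the DAG `X' → Z', X' → Y', Z' → Y'` with unequal noise variances `1, 1+b², 1/(1+b²)`
induce the same joint Gaussian distribution: the pushforwards of the i.i.d. standard
Gaussian noise under the two structural maps coincide. -/
theorem non_equal_variance_non_identifiable (b : ℝ) (hb : 0 < b) :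
    Measure.map
        (fun p : ℝ × ℝ × ℝ => (p.1, b * p.1 + p.2.1, b ^ 2 * p.1 + b * p.2.1 + p.2.2))
        ((gaussianReal 0 1).prod ((gaussianReal 0 1).prod (gaussianReal 0 1))) =
      Measure.map
        (fun p : ℝ × ℝ × ℝ =>
          (p.1,
            (b / (1 + b ^ 2)) * p.1 +
              (b / (1 + b ^ 2)) * (b ^ 2 * p.1 + Real.sqrt (1 + b ^ 2) * p.2.1) +
              (1 / Real.sqrt (1 + b ^ 2)) * p.2.2,
            b ^ 2 * p.1 + Real.sqrt (1 + b ^ 2) * p.2.1))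
        ((gaussianReal 0 1).prod ((gaussianReal 0 1).prod (gaussianReal 0 1))) := by
  set r : ℝ := Real.sqrt (1 + b ^ 2) with hrdef
  have hs : (0 : ℝ) < 1 + b ^ 2 := by positivity
  have hr2 : r ^ 2 = 1 + b ^ 2 := Real.sq_sqrt hs.le
  have hr0 : r ≠ 0 := by
    rw [hrdef]
    positivity
  set a : ℝ := b / r with hadef
  set c : ℝ := 1 / r with hcdef
  have hac : a ^ 2 + c ^ 2 = 1 := by
    rw [hadef, hcdef, div_pow, div_pow, hr2]
    field_simp
    ring
  have hRmeas : Measurable (fun p : ℝ × ℝ => (a * p.1 + c * p.2, c * p.1 - a * p.2)) := by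
    fun_prop
  have hfmeas : Measurable
      (fun p : ℝ × ℝ × ℝ => (p.1, b * p.1 + p.2.1, b ^ 2 * p.1 + b * p.2.1 + p.2.2)) := by
    fun_prop
  have hTmeas : Measurable
      (Prod.map (id : ℝ → ℝ) (fun p : ℝ × ℝ => (a * p.1 + c * p.2, c * p.1 - a * p.2))) :=
    measurable_id.prodMap hRmeas
  have hcomp : (fun p : ℝ × ℝ × ℝ =>
      (p.1,
        (b / (1 + b ^ 2)) * p.1 +
          (b / (1 + b ^ 2)) * (b ^ 2 * p.1 + r * p.2.1) +
          (1 / r) * p.2.2,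
        b ^ 2 * p.1 + r * p.2.1))
      = (fun p : ℝ × ℝ × ℝ => (p.1, b * p.1 + p.2.1, b ^ 2 * p.1 + b * p.2.1 + p.2.2)) ∘
        (Prod.map (id : ℝ → ℝ)
          (fun p : ℝ × ℝ => (a * p.1 + c * p.2, c * p.1 - a * p.2))) := by
    funext p
    simp only [Function.comp_apply, Prod.map_apply, Prod.map_fst, Prod.map_snd, id_eq, hadef, hcdef]
    rw [← hr2]
    refine Prod.ext rfl (Prod.ext ?_ ?_)
    · simp only
      field_simp
      linear_combination (-(b * p.1)) * hr2
    · simp only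
      field_simp
      linear_combination p.2.1 * hr2
  have hmap : Measure.map
      (Prod.map (id : ℝ → ℝ) (fun p : ℝ × ℝ => (a * p.1 + c * p.2, c * p.1 - a * p.2)))
      ((gaussianReal 0 1).prod ((gaussianReal 0 1).prod (gaussianReal 0 1)))
      = (gaussianReal 0 1).prod ((gaussianReal 0 1).prod (gaussianReal 0 1)) := by
    rw [← Measure.map_prod_map _ _ measurable_id hRmeas, Measure.map_id, map_rot hac]
  rw [hcomp, ← Measure.map_map hfmeas hTmeas, hmap]
end

section
/- Fix h ∈ ℕ, λ ∈ ℝ, and let n = 2^{h+1} − 1. Let B ∈ ℝ^{n×n} be the weighted adjacency matrix of the complete rooted binary tree of height h with all edge weights λ: B i (2i) = B i (2i+1) = λ for every internal node 1 ≤ i ≤ 2^h − 1, and all other entries 0. Let Σ = ((I − B)⁻¹)ᵀ(I − B)⁻¹ and let x = 2^{−h/2} · Σ_{i=2^h}^{2^{h+1}−1} e_i be the normalized indicator vector of the leaves. Then xᵀ Σ x = Σ_{k=0}^{h} (2λ²)^k. -/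
open Matrix BigOperators

private theorem aux_log_sum (F : ℕ → ℝ) : ∀ h : ℕ,
    ∑ m ∈ Finset.Ico 1 (2 ^ (h + 1)), F (Nat.log 2 m)
      = ∑ d ∈ Finset.range (h + 1), (2 : ℝ) ^ d * F d := by
  intro h
  induction h with
  | zero => simp
  | succ h ih =>
    rw [← Finset.sum_Ico_consecutive _ (Nat.one_le_two_pow)
        (Nat.pow_le_pow_right (by norm_num) (by omega) : 2 ^ (h + 1) ≤ 2 ^ (h + 2)), ih]
    have : ∀ m ∈ Finset.Ico (2 ^ (h + 1)) (2 ^ (h + 2)), F (Nat.log 2 m) = F (h + 1) := by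
      intro m hm
      rw [Finset.mem_Ico] at hm
      rw [Nat.log_eq_of_pow_le_of_lt_pow hm.1 hm.2]
    rw [Finset.sum_congr rfl this, Finset.sum_const, Nat.card_Ico]
    have h2 : 2 ^ (h + 2) - 2 ^ (h + 1) = 2 ^ (h + 1) := by
      rw [pow_succ 2 (h + 1)]; omega
    rw [h2, Finset.sum_range_succ _ (h + 1)]
    ring

/-- For the complete rooted binary tree of height `h` (nodes `1,…,n`
with `n = 2^{h+1} − 1`, node `i` the parent of `2i` and `2i+1`, indices here shifted to
`Fin n`), with all edge weights `λ` and covariance `Σ = ((I − B)⁻¹)ᵀ(I − B)⁻¹`, the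
normalized indicator vector `x = 2^{−h/2}·∑_{leaves} e_i` satisfies
`xᵀ Σ x = ∑_{k=0}^{h} (2λ²)^k`. -/
theorem binary_tree_leaf_average_variance (h : ℕ) (l : ℝ)
    (n : ℕ) (hn : n = 2 ^ (h + 1) - 1)
    (B : Matrix (Fin n) (Fin n) ℝ)
    (hBdef : ∀ i j : Fin n,
      B i j = if (j : ℕ) + 1 = 2 * ((i : ℕ) + 1) ∨ (j : ℕ) + 1 = 2 * ((i : ℕ) + 1) + 1
        then l else 0)
    (S : Matrix (Fin n) (Fin n) ℝ) (hS : S = ((1 - B)⁻¹)ᵀ * (1 - B)⁻¹)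
    (x : Fin n → ℝ)
    (hx : ∀ i : Fin n,
      x i = if 2 ^ h ≤ (i : ℕ) + 1 then (2 : ℝ) ^ (-(h : ℝ) / 2) else 0) :
    x ⬝ᵥ (S *ᵥ x) = ∑ k ∈ Finset.range (h + 1), (2 * l ^ 2) ^ k := by
  subst hS
  set c : ℝ := (2 : ℝ) ^ (-(h : ℝ) / 2) with hc
  have hn1 : n + 1 = 2 ^ (h + 1) := by
    have := Nat.one_le_two_pow (n := h + 1); omega
  have h2p : (2 : ℕ) ^ (h + 1) = 2 * 2 ^ h := by rw [pow_succ]; ring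
  set Y : ℕ → ℝ := fun m => c * (2 * l) ^ (h - Nat.log 2 (m + 1)) with hY
  set y : Fin n → ℝ := fun i => Y (i : ℕ) with hy
  have htri : (1 - B).BlockTriangular (id : Fin n → Fin n) := by
    intro i j hij
    have hij' : (j : ℕ) < (i : ℕ) := hij
    have h1 : (1 : Matrix (Fin n) (Fin n) ℝ) i j = 0 := by
      rw [Matrix.one_apply_ne]
      exact fun hh => absurd (Fin.val_eq_of_eq hh) (by omega)
    have h2 : B i j = 0 := by
      rw [hBdef, if_neg]; omega
    simp [Matrix.sub_apply, h1, h2]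
  have hdet : (1 - B).det = 1 := by
    rw [Matrix.det_of_upperTriangular htri]
    apply Finset.prod_eq_one
    intro i _
    have h2 : B i i = 0 := by rw [hBdef, if_neg]; omega
    simp [Matrix.sub_apply, h2]
  have hunit : IsUnit (1 - B).det := by rw [hdet]; exact isUnit_one
  have hmv : (1 - B) *ᵥ y = x := by
    funext i
    rw [Matrix.sub_mulVec, Matrix.one_mulVec]
    simp only [Pi.sub_apply]
    have hsum : (B *ᵥ y) i = ∑ j ∈ Finset.range n,
        (if j + 1 = 2 * ((i : ℕ) + 1) ∨ j + 1 = 2 * ((i : ℕ) + 1) + 1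
          then l * Y j else 0) := by
      simp only [Matrix.mulVec, dotProduct, hBdef, ite_mul, zero_mul, hy]
      exact Fin.sum_univ_eq_sum_range
        (fun j => if j + 1 = 2 * ((i : ℕ) + 1) ∨ j + 1 = 2 * ((i : ℕ) + 1) + 1
          then l * Y j else 0) n
    by_cases hi : (i : ℕ) + 1 < 2 ^ h
    · -- internal node
      have hj1 : 2 * (i : ℕ) + 1 < n := by omega
      have hj2 : 2 * (i : ℕ) + 2 < n := by omega
      have hsplit : ∀ j ∈ Finset.range n,
          (if j + 1 = 2 * ((i : ℕ) + 1) ∨ j + 1 = 2 * ((i : ℕ) + 1) + 1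
            then l * Y j else 0)
          = (if j = 2 * (i : ℕ) + 1 then l * Y j else 0)
            + (if j = 2 * (i : ℕ) + 2 then l * Y j else 0) := by
        intro j _
        by_cases e1 : j = 2 * (i : ℕ) + 1
        · rw [if_pos (by omega), if_pos e1, if_neg (by omega), add_zero]
        · by_cases e2 : j = 2 * (i : ℕ) + 2
          · rw [if_pos (by omega), if_neg e1, if_pos e2, zero_add]
          · rw [if_neg (by omega), if_neg e1, if_neg e2, add_zero]
      rw [hsum, Finset.sum_congr rfl hsplit, Finset.sum_add_distrib,
        Finset.sum_ite_eq' _ _ (fun j => l * Y j), Finset.sum_ite_eq' _ _ (fun j => l * Y j),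
        if_pos (Finset.mem_range.mpr hj1), if_pos (Finset.mem_range.mpr hj2)]
      set d0 := Nat.log 2 ((i : ℕ) + 1) with hd0
      have hlb : 2 ^ d0 ≤ (i : ℕ) + 1 := Nat.pow_log_le_self 2 (by omega)
      have hub : (i : ℕ) + 1 < 2 ^ (d0 + 1) := Nat.lt_pow_succ_log_self (by norm_num) _
      have hd0h : d0 < h := Nat.log_lt_of_lt_pow (by omega) hi
      have hp1 : (2 : ℕ) ^ (d0 + 1) = 2 * 2 ^ d0 := by rw [pow_succ]; ring
      have hp2 : (2 : ℕ) ^ (d0 + 2) = 4 * 2 ^ d0 := by rw [pow_succ, pow_succ]; ring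
      have hl1 : Nat.log 2 (2 * (i : ℕ) + 1 + 1) = d0 + 1 := by
        apply Nat.log_eq_of_pow_le_of_lt_pow
        · rw [hp1]; omega
        · rw [show d0 + 1 + 1 = d0 + 2 from rfl, hp2]; omega
      have hl2 : Nat.log 2 (2 * (i : ℕ) + 2 + 1) = d0 + 1 := by
        apply Nat.log_eq_of_pow_le_of_lt_pow
        · rw [hp1]; omega
        · rw [show d0 + 1 + 1 = d0 + 2 from rfl, hp2]; omega
      have hxi : x i = 0 := by rw [hx, if_neg]; omega
      have hys : h - d0 = (h - (d0 + 1)) + 1 := by omega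
      rw [hxi, hy, hY]
      simp only [hl1, hl2, ← hd0, hys, pow_succ]
      ring
    · -- leaf node
      have hzero : (B *ᵥ y) i = 0 := by
        rw [hsum]
        apply Finset.sum_eq_zero
        intro j hj
        rw [Finset.mem_range] at hj
        rw [if_neg]
        omega
      have hli : Nat.log 2 ((i : ℕ) + 1) = h := by
        apply Nat.log_eq_of_pow_le_of_lt_pow (by omega)
        have := i.isLt; omega
      have hxi : x i = c := by rw [hx, if_pos (by omega)]
      rw [hzero, hxi, hy, hY]
      simp [hli]
  have hyx : (1 - B)⁻¹ *ᵥ x = y := by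
    rw [← hmv, Matrix.mulVec_mulVec, Matrix.nonsing_inv_mul _ hunit, Matrix.one_mulVec]
  have hquad : x ⬝ᵥ ((((1 - B)⁻¹)ᵀ * (1 - B)⁻¹) *ᵥ x) = y ⬝ᵥ y := by
    rw [← Matrix.mulVec_mulVec, Matrix.dotProduct_mulVec, Matrix.vecMul_transpose, hyx]
  rw [hquad]
  set F : ℕ → ℝ := fun d => (c * (2 * l) ^ (h - d)) * (c * (2 * l) ^ (h - d)) with hF
  have hdot : y ⬝ᵥ y = ∑ m ∈ Finset.Ico 1 (2 ^ (h + 1)), F (Nat.log 2 m) := by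
    rw [dotProduct]
    simp only [hy]
    rw [Fin.sum_univ_eq_sum_range (fun m => Y m * Y m) n, Finset.sum_Ico_eq_sum_range]
    have hrange : 2 ^ (h + 1) - 1 = n := by omega
    rw [hrange]
    apply Finset.sum_congr rfl
    intro m _
    rw [hY, hF]
    simp [add_comm]
  rw [hdot, aux_log_sum F h]
  rw [← Finset.sum_range_reflect (fun d => (2 : ℝ) ^ d * F d) (h + 1)]
  apply Finset.sum_congr rfl
  intro k hk
  rw [Finset.mem_range] at hk
  have hkh : k ≤ h := by omega
  simp only [Nat.add_sub_cancel, hF]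
  rw [show h - (h - k) = k from by omega]
  have hc2' : c * c * (2 : ℝ) ^ h = 1 := by
    have : c * c = (2 : ℝ) ^ (-(h : ℝ)) := by
      rw [hc, ← Real.rpow_add (by norm_num : (0:ℝ) < 2)]
      norm_num
    rw [this, Real.rpow_neg (by norm_num), Real.rpow_natCast,
      inv_mul_cancel₀ (by positivity)]
  have hAK : (2 : ℝ) ^ (h - k) * 2 ^ k = 2 ^ h := by
    rw [← pow_add]; congr 1; omega
  rw [mul_pow 2 l k, mul_pow 2 (l ^ 2) k,
    show (l ^ 2) ^ k = (l ^ k) ^ 2 from by rw [← pow_mul, ← pow_mul, mul_comm]]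
  linear_combination (c * c * (2 : ℝ) ^ k * (l ^ k) ^ 2) * hAK
    + ((2 : ℝ) ^ k * (l ^ k) ^ 2) * hc2'
end

section
/- Fix h ∈ ℕ, λ ∈ (1/√2, 1), and let n = 2^{h+1} − 1. Let B ∈ ℝ^{n×n} be the weighted adjacency matrix of the complete rooted binary tree of height h with all edge weights λ (B i (2i) = B i (2i+1) = λ for 1 ≤ i ≤ 2^h − 1, all other entries 0) and let Σ = ((I − B)⁻¹)ᵀ(I − B)⁻¹. Then every diagonal entry satisfies Σ i i ≤ 1/(1 − λ²), while the condition number of Σ satisfies κ(Σ) = λ_max(Σ)/λ_min(Σ) ≥ Σ_{k=0}^{h} (2λ²)^k ≥ (2λ²)^h. (Hence there are DAG sequences with uniformly bounded variances whose condition number grows polynomially in the number of nodes.) -/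
open Matrix BigOperators

/-! ### Auxiliary lemmas -/

lemma sum_fin_eq_sum_Ico' (n : ℕ) (f : ℕ → ℝ) :
    ∑ j : Fin n, f ((j : ℕ) + 1) = ∑ v ∈ Finset.Ico 1 (n + 1), f v := by
  rw [Finset.sum_Ico_eq_sum_range]
  simp [Fin.sum_univ_eq_sum_range (fun j => f (j + 1)) n, add_comm]

lemma depth_sum' (m : ℕ) (F : ℕ → ℝ) :
    ∑ u ∈ Finset.Ico 1 (2 ^ (m + 1)), F (Nat.log 2 u)
      = ∑ d ∈ Finset.range (m + 1), 2 ^ d * F d := by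
  induction m with
  | zero => simp
  | succ m ih =>
      have hsplit := Finset.sum_Ico_consecutive (fun u => F (Nat.log 2 u))
        (Nat.one_le_two_pow : 1 ≤ 2 ^ (m + 1))
        (Nat.pow_le_pow_right (by norm_num) (by omega) : 2 ^ (m + 1) ≤ 2 ^ (m + 2))
      have hconst : ∀ u ∈ Finset.Ico (2 ^ (m + 1)) (2 ^ (m + 2)), F (Nat.log 2 u) = F (m + 1) := by
        intro u hu
        rw [Finset.mem_Ico] at hu
        rw [Nat.log_eq_of_pow_le_of_lt_pow hu.1 hu.2]
      have hcard : 2 ^ (m + 2) - 2 ^ (m + 1) = 2 ^ (m + 1) := by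
        have : (2 : ℕ) ^ (m + 2) = 2 ^ (m + 1) * 2 := by ring
        omega
      calc ∑ u ∈ Finset.Ico 1 (2 ^ (m + 1 + 1)), F (Nat.log 2 u)
          = ∑ u ∈ Finset.Ico 1 (2 ^ (m + 1)), F (Nat.log 2 u)
            + ∑ u ∈ Finset.Ico (2 ^ (m + 1)) (2 ^ (m + 2)), F (Nat.log 2 u) := hsplit.symm
        _ = ∑ d ∈ Finset.range (m + 1), 2 ^ d * F d + 2 ^ (m + 1) * F (m + 1) := by
            rw [ih, Finset.sum_congr rfl hconst, Finset.sum_const, Nat.card_Ico, hcard,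
              nsmul_eq_mul]
            push_cast
            ring
        _ = ∑ d ∈ Finset.range (m + 1 + 1), 2 ^ d * F d := (Finset.sum_range_succ _ _).symm

lemma interval_count' (c : ℝ) (a b N : ℕ) (h1 : 1 ≤ a) (h2 : b ≤ N + 1) :
    (∑ v ∈ Finset.Ico 1 (N + 1), if a ≤ v ∧ v < b then c else 0) = (b - a : ℕ) * c := by
  rw [← Finset.sum_filter]
  have hfil : (Finset.Ico 1 (N + 1)).filter (fun v => a ≤ v ∧ v < b) = Finset.Ico a b := by
    ext v
    simp only [Finset.mem_filter, Finset.mem_Ico]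
    omega
  rw [hfil]
  simp [Finset.sum_const, Nat.card_Ico]

lemma pow_term' (l : ℝ) (m j : ℕ) :
    (2 : ℝ) ^ m * ((2 : ℝ) ^ j * l ^ j) ^ 2 = 2 ^ (m + j) * (2 * l ^ 2) ^ j := by
  ring

noncomputable def Mmat (n : ℕ) (l : ℝ) : Matrix (Fin n) (Fin n) ℝ :=
  Matrix.of fun i j =>
    if ((j : ℕ) + 1) / 2 ^ (Nat.log 2 ((j : ℕ) + 1) - Nat.log 2 ((i : ℕ) + 1)) = (i : ℕ) + 1
    then l ^ (Nat.log 2 ((j : ℕ) + 1) - Nat.log 2 ((i : ℕ) + 1)) else 0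

lemma Mmat_left_inv (n : ℕ) (l : ℝ) (B : Matrix (Fin n) (Fin n) ℝ)
    (hBdef : ∀ i j : Fin n,
      B i j = if (j : ℕ) + 1 = 2 * ((i : ℕ) + 1) ∨ (j : ℕ) + 1 = 2 * ((i : ℕ) + 1) + 1
        then l else 0) :
    Mmat n l * (1 - B) = 1 := by
  rw [Matrix.mul_sub, Matrix.mul_one]
  ext i j
  rw [Matrix.sub_apply, Matrix.mul_apply]
  set a : ℕ := (i : ℕ) + 1 with ha
  set b : ℕ := (j : ℕ) + 1 with hb
  by_cases hj0 : (j : ℕ) = 0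
  · have hBk : ∀ k : Fin n, B k j = 0 := by
      intro k
      rw [hBdef]
      have : ¬((j : ℕ) + 1 = 2 * ((k : ℕ) + 1) ∨ (j : ℕ) + 1 = 2 * ((k : ℕ) + 1) + 1) := by
        omega
      rw [if_neg this]
    simp only [hBk, mul_zero, Finset.sum_const_zero, sub_zero]
    have hb1 : b = 1 := by omega
    simp only [Mmat, Matrix.of_apply, ← ha, ← hb, hb1, Nat.log_one_right, Nat.zero_sub,
      pow_zero, Nat.div_one, Matrix.one_apply]
    by_cases hia : (1 : ℕ) = a
    · rw [if_pos hia, if_pos (by rw [Fin.ext_iff]; omega)]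
    · rw [if_neg hia, if_neg (by rw [Fin.ext_iff]; omega)]
  · have hb2 : 2 ≤ b := by omega
    have hbn : (j : ℕ) < n := j.isLt
    have hpn : b / 2 - 1 < n := by omega
    set p : Fin n := ⟨b / 2 - 1, hpn⟩ with hp
    have hp1 : (p : ℕ) + 1 = b / 2 := by
      simp only [hp]
      omega
    have hBk : ∀ k : Fin n, B k j = if k = p then l else 0 := by
      intro k
      rw [hBdef]
      by_cases hk : k = p
      · rw [if_pos, if_pos hk]
        subst hk
        rw [← hb]
        omega
      · rw [if_neg, if_neg hk]
        intro hcon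
        apply hk
        apply Fin.ext
        simp only [hp]
        omega
    have hsum : ∑ k : Fin n, Mmat n l i k * B k j = Mmat n l i p * l := by
      simp only [hBk, mul_ite, mul_zero]
      rw [Finset.sum_ite_eq' Finset.univ p (fun k => Mmat n l i k * l)]
      rw [if_pos (Finset.mem_univ p)]
    rw [hsum]
    set da : ℕ := Nat.log 2 a with hda
    set db : ℕ := Nat.log 2 b with hdb
    have hdb1 : 1 ≤ db := Nat.log_pos (by norm_num) hb2
    have hdp' : Nat.log 2 (b / 2) = db - 1 := by
      rw [hdb]; exact Nat.log_div_base 2 b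
    have hdiv2 : ∀ s : ℕ, b / 2 ^ (s + 1) = (b / 2) / 2 ^ s := by
      intro s
      rw [Nat.div_div_eq_div_mul]
      congr 1
      ring
    have hMij : Mmat n l i j = if b / 2 ^ (db - da) = a then l ^ (db - da) else 0 := rfl
    have hMip : Mmat n l i p
        = if (b / 2) / 2 ^ (db - 1 - da) = a then l ^ (db - 1 - da) else 0 := by
      simp only [Mmat, Matrix.of_apply, hp1, hdp', ← ha, ← hda]
    by_cases hij : i = j
    · have hab : a = b := by rw [ha, hb, hij]
      have hdd : da = db := by rw [hda, hdb, hab]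
      have h0 : db - 1 - da = 0 := by omega
      have h1 : db - da = 0 := by omega
      rw [Matrix.one_apply, if_pos hij, hMij, hMip, h1, h0]
      simp only [pow_zero, Nat.div_one]
      rw [if_pos hab.symm, if_neg (by omega : ¬(b / 2 = a))]
      ring
    · have hab : a ≠ b := fun hcon => hij (Fin.ext (by omega))
      rw [Matrix.one_apply_ne hij, hMij, hMip]
      by_cases hC : b / 2 ^ (db - da) = a
      · have hlt : da < db := by
          rcases Nat.lt_or_ge da db with hlt | hge
          · exact hlt
          · exfalso
            have ht0 : db - da = 0 := by omega
            rw [ht0, pow_zero, Nat.div_one] at hC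
            exact hab hC.symm
        have hstep : db - da = (db - 1 - da) + 1 := by omega
        have hCp : (b / 2) / 2 ^ (db - 1 - da) = a := by
          rw [← hdiv2, ← hstep]
          exact hC
        rw [if_pos hC, if_pos hCp, hstep, pow_succ]
        ring
      · have hCp : ¬((b / 2) / 2 ^ (db - 1 - da) = a) := by
          intro hcon
          by_cases hle : da ≤ db - 1
          · apply hC
            have hstep : db - da = (db - 1 - da) + 1 := by omega
            rw [hstep, hdiv2]
            exact hcon
          · have h0 : db - 1 - da = 0 := by omega
            rw [h0, pow_zero, Nat.div_one] at hcon
            have hlog : Nat.log 2 a = db - 1 := by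
              rw [← hcon, hdb]
              exact Nat.log_div_base 2 b
            omega
        rw [if_neg hC, if_neg hCp]
        ring

lemma quad_form_eq' {n : ℕ} {S : Matrix (Fin n) (Fin n) ℝ} (hS : S.IsHermitian)
    (x : Fin n → ℝ) :
    x ⬝ᵥ (S *ᵥ x) = ∑ i, hS.eigenvalues i *
      ((star (hS.eigenvectorUnitary : Matrix (Fin n) (Fin n) ℝ) *ᵥ x) i) ^ 2 := by
  set U : Matrix (Fin n) (Fin n) ℝ := (hS.eigenvectorUnitary : Matrix (Fin n) (Fin n) ℝ) with hU
  have hsp := hS.spectral_theorem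
  simp only [Unitary.conjStarAlgAut_apply, Unitary.coe_star, ← hU] at hsp
  set w : Fin n → ℝ := star U *ᵥ x with hw
  have hvm : x ᵥ* U = w := by
    rw [hw, Matrix.star_eq_conjTranspose, Matrix.conjTranspose_eq_transpose_of_trivial,
      Matrix.mulVec_transpose]
  calc x ⬝ᵥ (S *ᵥ x)
      = x ⬝ᵥ ((U * (Matrix.diagonal (RCLike.ofReal ∘ hS.eigenvalues) * star U)) *ᵥ x) := by
        rw [mul_assoc] at hsp
        rw [← hsp]
    _ = (x ᵥ* U) ⬝ᵥ ((Matrix.diagonal (RCLike.ofReal ∘ hS.eigenvalues)) *ᵥ (star U *ᵥ x)) := by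
        rw [← Matrix.mulVec_mulVec, ← Matrix.mulVec_mulVec, Matrix.dotProduct_mulVec]
    _ = ∑ i, hS.eigenvalues i * (w i) ^ 2 := by
        rw [hvm, ← hw]
        simp only [dotProduct, Matrix.mulVec_diagonal, RCLike.ofReal_real_eq_id,
          Function.comp, id_eq]
        apply Finset.sum_congr rfl
        intro i _
        ring

lemma norm_w_eq' {n : ℕ} {S : Matrix (Fin n) (Fin n) ℝ} (hS : S.IsHermitian)
    (x : Fin n → ℝ) :
    (star (hS.eigenvectorUnitary : Matrix (Fin n) (Fin n) ℝ) *ᵥ x)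
      ⬝ᵥ (star (hS.eigenvectorUnitary : Matrix (Fin n) (Fin n) ℝ) *ᵥ x) = x ⬝ᵥ x := by
  set U : Matrix (Fin n) (Fin n) ℝ := (hS.eigenvectorUnitary : Matrix (Fin n) (Fin n) ℝ) with hU
  have hvm : x ᵥ* U = star U *ᵥ x := by
    rw [Matrix.star_eq_conjTranspose, Matrix.conjTranspose_eq_transpose_of_trivial,
      Matrix.mulVec_transpose]
  have hUU : U * star U = 1 := (Matrix.mem_unitaryGroup_iff).mp hS.eigenvectorUnitary.2
  calc (star U *ᵥ x) ⬝ᵥ (star U *ᵥ x)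
      = (x ᵥ* U) ⬝ᵥ (star U *ᵥ x) := by rw [hvm]
    _ = x ⬝ᵥ ((U * star U) *ᵥ x) := by rw [← Matrix.dotProduct_mulVec, Matrix.mulVec_mulVec]
    _ = x ⬝ᵥ x := by rw [hUU, Matrix.one_mulVec]

/-- For the complete rooted binary tree of height `h` with all edge
weights `λ ∈ (1/√2, 1)` and covariance `Σ = ((I − B)⁻¹)ᵀ(I − B)⁻¹`: every variance
`Σ i i` is at most `1/(1 − λ²)`, while the condition number
`κ(Σ) = λ_max(Σ)/λ_min(Σ)` is at least `∑_{k=0}^h (2λ²)^k ≥ (2λ²)^h`. -/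
theorem binary_tree_bounded_variance_large_condition_number (h : ℕ) (l : ℝ)
    (hl1 : 1 / Real.sqrt 2 < l) (hl2 : l < 1)
    (n : ℕ) (hn : n = 2 ^ (h + 1) - 1)
    (B : Matrix (Fin n) (Fin n) ℝ)
    (hBdef : ∀ i j : Fin n,
      B i j = if (j : ℕ) + 1 = 2 * ((i : ℕ) + 1) ∨ (j : ℕ) + 1 = 2 * ((i : ℕ) + 1) + 1
        then l else 0)
    (S : Matrix (Fin n) (Fin n) ℝ) (hSdef : S = ((1 - B)⁻¹)ᵀ * (1 - B)⁻¹)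
    (hS : S.IsHermitian) :
    (∀ i : Fin n, S i i ≤ 1 / (1 - l ^ 2)) ∧
    (∑ k ∈ Finset.range (h + 1), (2 * l ^ 2) ^ k ≤
        (⨆ i, hS.eigenvalues i) / (⨅ i, hS.eigenvalues i)) ∧
    ((2 * l ^ 2) ^ h ≤ ∑ k ∈ Finset.range (h + 1), (2 * l ^ 2) ^ k) := by
  have hsq2 : Real.sqrt 2 * Real.sqrt 2 = 2 := Real.mul_self_sqrt (by norm_num)
  have hs2pos : 0 < Real.sqrt 2 := Real.sqrt_pos.mpr (by norm_num)
  have hl0 : 0 < l := lt_trans (div_pos one_pos hs2pos) hl1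
  have hll : l ^ 2 < 1 := by nlinarith
  have h1l2 : 0 < 1 - l ^ 2 := by linarith
  have hpow2 : 2 ≤ 2 ^ (h + 1) := by
    calc (2:ℕ) = 2 ^ 1 := rfl
      _ ≤ 2 ^ (h + 1) := Nat.pow_le_pow_right (by norm_num) (by omega)
  have hn0 : 0 < n := by omega
  have hnpow : n + 1 = 2 ^ (h + 1) := by omega
  set M := Mmat n l with hM
  have hleft : M * (1 - B) = 1 := Mmat_left_inv n l B hBdef
  have hinv : (1 - B)⁻¹ = M := Matrix.inv_eq_left_inv hleft
  have hright : (1 - B) * M = 1 := mul_eq_one_comm.mpr hleft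
  have hS' : S = Mᵀ * M := by rw [hSdef, hinv]
  have hMent : ∀ k j : Fin n, M k j =
      if ((j : ℕ) + 1) / 2 ^ (Nat.log 2 ((j : ℕ) + 1) - Nat.log 2 ((k : ℕ) + 1)) = (k : ℕ) + 1
      then l ^ (Nat.log 2 ((j : ℕ) + 1) - Nat.log 2 ((k : ℕ) + 1)) else 0 := fun k j => rfl
  -- diagonal entries
  have hdiag : ∀ i : Fin n, S i i = ∑ k : Fin n, (M k i) ^ 2 := by
    intro i
    rw [hS', Matrix.mul_apply]
    apply Finset.sum_congr rfl
    intro k _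
    rw [Matrix.transpose_apply, sq]
  have hgeom : ∀ m : ℕ, ∑ t ∈ Finset.range m, (l ^ 2) ^ t ≤ 1 / (1 - l ^ 2) := by
    intro m
    rw [geom_sum_eq (by nlinarith : (l ^ 2 : ℝ) ≠ 1) m]
    have heq : ((l ^ 2) ^ m - 1) / (l ^ 2 - 1) = (1 - (l ^ 2) ^ m) / (1 - l ^ 2) := by
      rw [← neg_div_neg_eq]
      ring_nf
    rw [heq]
    apply (div_le_div_iff_of_pos_right h1l2).mpr
    have := pow_nonneg (sq_nonneg l) m
    linarith
  have hdiagbound : ∀ i : Fin n, S i i ≤ 1 / (1 - l ^ 2) := by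
    intro i
    rw [hdiag i]
    set di := Nat.log 2 ((i : ℕ) + 1) with hdi
    set A := Finset.univ.filter (fun k : Fin n => M k i ≠ 0) with hA
    have h1 : ∑ k : Fin n, (M k i) ^ 2 = ∑ k ∈ A, (M k i) ^ 2 := by
      rw [hA, Finset.sum_filter_of_ne]
      intro k _ hne
      exact fun hc => hne (by rw [hc]; ring)
    have hcond : ∀ k ∈ A, ((i : ℕ) + 1) / 2 ^ (di - Nat.log 2 ((k : ℕ) + 1)) = (k : ℕ) + 1 := by
      intro k hk
      rw [hA, Finset.mem_filter] at hk
      by_contra hc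
      exact hk.2 (by rw [hMent k i, ← hdi, if_neg hc])
    have hinj : ∀ k ∈ A, ∀ k' ∈ A,
        di - Nat.log 2 ((k : ℕ) + 1) = di - Nat.log 2 ((k' : ℕ) + 1) → k = k' := by
      intro k hk k' hk' he
      have h1 := hcond k hk
      have h2 := hcond k' hk'
      rw [he] at h1
      exact Fin.ext (by omega)
    have hval : ∀ k ∈ A, (M k i) ^ 2 = (l ^ 2) ^ (di - Nat.log 2 ((k : ℕ) + 1)) := by
      intro k hk
      rw [hMent k i, ← hdi, if_pos (hcond k hk)]
      rw [← pow_mul, ← pow_mul, mul_comm]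
    have hsub : A.image (fun k : Fin n => di - Nat.log 2 ((k : ℕ) + 1))
        ⊆ Finset.range (di + 1) := by
      intro t ht
      rw [Finset.mem_image] at ht
      obtain ⟨k, _, hk⟩ := ht
      rw [Finset.mem_range, ← hk]
      omega
    calc ∑ k : Fin n, (M k i) ^ 2
        = ∑ k ∈ A, (M k i) ^ 2 := h1
      _ = ∑ k ∈ A, (l ^ 2) ^ (di - Nat.log 2 ((k : ℕ) + 1)) := Finset.sum_congr rfl hval
      _ = ∑ t ∈ A.image (fun k : Fin n => di - Nat.log 2 ((k : ℕ) + 1)), (l ^ 2) ^ t :=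
          (Finset.sum_image hinj).symm
      _ ≤ ∑ t ∈ Finset.range (di + 1), (l ^ 2) ^ t :=
          Finset.sum_le_sum_of_subset_of_nonneg hsub
            (fun t _ _ => pow_nonneg (sq_nonneg l) t)
      _ ≤ 1 / (1 - l ^ 2) := hgeom _
  -- root entry
  set i0 : Fin n := ⟨0, hn0⟩ with hi0
  have hMroot : ∀ k : Fin n, M k i0 = if k = i0 then 1 else 0 := by
    intro k
    rw [hMent k i0]
    have e0 : ((i0 : ℕ) + 1) = 1 := rfl
    rw [e0, Nat.log_one_right, Nat.zero_sub, pow_zero, pow_zero, Nat.div_one]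
    by_cases hk : k = i0
    · subst hk
      rw [if_pos rfl, if_pos rfl]
    · have hk0 : (k : ℕ) ≠ 0 := by
        intro hc
        exact hk (Fin.ext (by simp [hi0, hc]))
      rw [if_neg (by omega), if_neg hk]
  have hSroot : S i0 i0 = 1 := by
    have hsq : ∀ k : Fin n, (M k i0) ^ 2 = if k = i0 then (1 : ℝ) else 0 := by
      intro k
      rw [hMroot k]
      by_cases hk : k = i0 <;> simp [hk]
    rw [hdiag i0, Finset.sum_congr rfl (fun k _ => hsq k),
      Finset.sum_ite_eq' Finset.univ i0 (fun _ => (1 : ℝ)), if_pos (Finset.mem_univ i0)]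
  -- positive definiteness
  have hPD : S.PosDef := by
    rw [hS']
    refine Matrix.posDef_iff_dotProduct_mulVec.mpr ⟨by simpa [Matrix.conjTranspose_eq_transpose_of_trivial] using Matrix.isHermitian_conjTranspose_mul_self M, fun x hx => ?_⟩
    have hMx : M *ᵥ x ≠ 0 := by
      intro hc
      apply hx
      have hxe : (1 - B) *ᵥ (M *ᵥ x) = x := by
        rw [Matrix.mulVec_mulVec, hright, Matrix.one_mulVec]
      rw [← hxe, hc, Matrix.mulVec_zero]
    have he : dotProduct (star x) ((Mᵀ * M) *ᵥ x) = (M *ᵥ x) ⬝ᵥ (M *ᵥ x) := by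
      rw [star_trivial, ← Matrix.mulVec_mulVec, Matrix.dotProduct_mulVec,
        Matrix.vecMul_transpose]
    rw [he]
    have hnn : 0 ≤ (M *ᵥ x) ⬝ᵥ (M *ᵥ x) := Finset.sum_nonneg (fun i _ => mul_self_nonneg _)
    have hne0 : (M *ᵥ x) ⬝ᵥ (M *ᵥ x) ≠ 0 := fun hc => hMx (dotProduct_self_eq_zero.mp hc)
    exact lt_of_le_of_ne hnn (Ne.symm hne0)
  -- Rayleigh quotient bounds
  have hnem : Nonempty (Fin n) := ⟨i0⟩
  have hbdd : BddAbove (Set.range hS.eigenvalues) := (Set.finite_range _).bddAbove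
  have hbddb : BddBelow (Set.range hS.eigenvalues) := (Set.finite_range _).bddBelow
  have hup : ∀ x : Fin n → ℝ, x ⬝ᵥ (S *ᵥ x) ≤ (⨆ i, hS.eigenvalues i) * (x ⬝ᵥ x) := by
    intro x
    rw [quad_form_eq' hS x]
    have hxw : x ⬝ᵥ x = ∑ i, ((star (hS.eigenvectorUnitary : Matrix (Fin n) (Fin n) ℝ)
        *ᵥ x) i) ^ 2 := by
      rw [← norm_w_eq' hS x]
      exact Finset.sum_congr rfl (fun i _ => (sq _).symm)
    rw [hxw, Finset.mul_sum]
    apply Finset.sum_le_sum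
    intro i _
    exact mul_le_mul_of_nonneg_right (le_ciSup hbdd i) (sq_nonneg _)
  have hlow : ∀ x : Fin n → ℝ, (⨅ i, hS.eigenvalues i) * (x ⬝ᵥ x) ≤ x ⬝ᵥ (S *ᵥ x) := by
    intro x
    rw [quad_form_eq' hS x]
    have hxw : x ⬝ᵥ x = ∑ i, ((star (hS.eigenvectorUnitary : Matrix (Fin n) (Fin n) ℝ)
        *ᵥ x) i) ^ 2 := by
      rw [← norm_w_eq' hS x]
      exact Finset.sum_congr rfl (fun i _ => (sq _).symm)
    rw [hxw, Finset.mul_sum]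
    apply Finset.sum_le_sum
    intro i _
    exact mul_le_mul_of_nonneg_right (ciInf_le hbddb i) (sq_nonneg _)
  have hminpos : 0 < ⨅ i, hS.eigenvalues i := by
    obtain ⟨imin, _, hmin⟩ := Finset.exists_min_image Finset.univ hS.eigenvalues
      ⟨i0, Finset.mem_univ i0⟩
    have hge : hS.eigenvalues imin ≤ ⨅ i, hS.eigenvalues i :=
      le_ciInf (fun j => hmin j (Finset.mem_univ j))
    exact lt_of_lt_of_le (hPD.eigenvalues_pos imin) hge
  -- μmin ≤ 1 via the root vector
  set x0 : Fin n → ℝ := fun k => if k = i0 then 1 else 0 with hx0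
  have hx0n : x0 ⬝ᵥ x0 = 1 := by
    simp [hx0, dotProduct, ite_mul, mul_ite, mul_one, mul_zero]
  have hx0S : x0 ⬝ᵥ (S *ᵥ x0) = S i0 i0 := by
    simp [hx0, dotProduct, Matrix.mulVec, ite_mul, mul_ite, mul_one, mul_zero,
      Finset.sum_ite_eq', Finset.sum_ite_eq]
  have hminle : (⨅ i, hS.eigenvalues i) ≤ 1 := by
    have := hlow x0
    rw [hx0n, hx0S, hSroot, mul_one] at this
    exact this
  -- leaf vector
  have hdk_le : ∀ k : Fin n, Nat.log 2 ((k : ℕ) + 1) ≤ h := by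
    intro k
    have hk : (k : ℕ) + 1 < 2 ^ (h + 1) := by
      have := k.isLt
      omega
    have := Nat.log_lt_of_lt_pow (show (k : ℕ) + 1 ≠ 0 by omega) hk
    omega
  set v : Fin n → ℝ := fun j => if Nat.log 2 ((j : ℕ) + 1) = h then 1 else 0 with hv
  set G1 : ℕ → ℝ := fun d => if d = h then (1 : ℝ) else 0 with hG1
  have hvv : v ⬝ᵥ v = 2 ^ h := by
    calc v ⬝ᵥ v
        = ∑ j : Fin n, G1 (Nat.log 2 ((j : ℕ) + 1)) := by
          simp only [dotProduct]
          apply Finset.sum_congr rfl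
          intro j _
          simp only [hv, hG1]
          by_cases hj : Nat.log 2 ((j : ℕ) + 1) = h <;> simp [hj]
      _ = ∑ u ∈ Finset.Ico 1 (n + 1), G1 (Nat.log 2 u) :=
          sum_fin_eq_sum_Ico' n (fun u => G1 (Nat.log 2 u))
      _ = ∑ d ∈ Finset.range (h + 1), 2 ^ d * G1 d := by
          rw [hnpow]
          exact depth_sum' h G1
      _ = 2 ^ h := by
          have h2 : ∀ d ∈ Finset.range (h + 1),
              (2 : ℝ) ^ d * G1 d = if d = h then (2 : ℝ) ^ h else 0 := by
            intro d _
            simp only [hG1]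
            by_cases hd : d = h <;> simp [hd]
          rw [Finset.sum_congr rfl h2,
            Finset.sum_ite_eq' (Finset.range (h + 1)) h (fun _ => (2 : ℝ) ^ h),
            if_pos (Finset.self_mem_range_succ h)]
  -- M applied to the leaf vector
  have hMv : ∀ k : Fin n, (M *ᵥ v) k
      = 2 ^ (h - Nat.log 2 ((k : ℕ) + 1)) * l ^ (h - Nat.log 2 ((k : ℕ) + 1)) := by
    intro k
    set dk := Nat.log 2 ((k : ℕ) + 1) with hdk
    set s := h - dk with hs
    have hks : 2 ^ dk ≤ (k : ℕ) + 1 := Nat.pow_log_le_self 2 (by omega)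
    have hks2 : (k : ℕ) + 1 < 2 ^ (dk + 1) := Nat.lt_pow_succ_log_self (by norm_num) _
    have hdkh : dk ≤ h := hdk_le k
    have hpos : 0 < 2 ^ s := Nat.pow_pos (by norm_num)
    calc (M *ᵥ v) k
        = ∑ j : Fin n, M k j * v j := rfl
      _ = ∑ j : Fin n, (fun u : ℕ =>
            (if u / 2 ^ (Nat.log 2 u - dk) = (k : ℕ) + 1 then l ^ (Nat.log 2 u - dk) else 0)
              * G1 (Nat.log 2 u)) ((j : ℕ) + 1) := by
          apply Finset.sum_congr rfl
          intro j _
          rw [hMent k j]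
      _ = ∑ u ∈ Finset.Ico 1 (n + 1),
            (if u / 2 ^ (Nat.log 2 u - dk) = (k : ℕ) + 1 then l ^ (Nat.log 2 u - dk) else 0)
              * G1 (Nat.log 2 u) :=
          sum_fin_eq_sum_Ico' n (fun u : ℕ =>
            (if u / 2 ^ (Nat.log 2 u - dk) = (k : ℕ) + 1 then l ^ (Nat.log 2 u - dk) else 0)
              * G1 (Nat.log 2 u))
      _ = ∑ u ∈ Finset.Ico 1 (n + 1),
            (if ((k : ℕ) + 1) * 2 ^ s ≤ u ∧ u < ((k : ℕ) + 2) * 2 ^ s then l ^ s else 0) := by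
          apply Finset.sum_congr rfl
          intro u hu
          rw [Finset.mem_Ico] at hu
          obtain ⟨hu1, hu2⟩ := hu
          by_cases hlog : Nat.log 2 u = h
          · rw [hlog]
            have hG1h : G1 h = 1 := by simp [hG1]
            rw [hG1h, mul_one, ← hs]
            have hiff : u / 2 ^ s = (k : ℕ) + 1 ↔
                ((k : ℕ) + 1) * 2 ^ s ≤ u ∧ u < ((k : ℕ) + 2) * 2 ^ s := by
              constructor
              · intro hq
                constructor
                · exact (Nat.le_div_iff_mul_le hpos).mp (le_of_eq hq.symm)
                · have hlt : u / 2 ^ s < (k : ℕ) + 2 := by omega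
                  exact (Nat.div_lt_iff_lt_mul hpos).mp hlt
              · rintro ⟨hq1, hq2⟩
                have ha := (Nat.le_div_iff_mul_le hpos).mpr hq1
                have hb := (Nat.div_lt_iff_lt_mul hpos).mpr hq2
                omega
            by_cases hc : u / 2 ^ s = (k : ℕ) + 1
            · rw [if_pos hc, if_pos (hiff.mp hc)]
            · rw [if_neg hc, if_neg (fun hb => hc (hiff.mpr hb))]
          · have hG1u : G1 (Nat.log 2 u) = 0 := by simp [hG1, hlog]
            have hnb : ¬(((k : ℕ) + 1) * 2 ^ s ≤ u ∧ u < ((k : ℕ) + 2) * 2 ^ s) := by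
              rintro ⟨hq1, hq2⟩
              apply hlog
              apply Nat.log_eq_of_pow_le_of_lt_pow
              · calc 2 ^ h = 2 ^ dk * 2 ^ s := by rw [← pow_add]; congr 1; omega
                  _ ≤ ((k : ℕ) + 1) * 2 ^ s := Nat.mul_le_mul_right _ hks
                  _ ≤ u := hq1
              · calc u < ((k : ℕ) + 2) * 2 ^ s := hq2
                  _ ≤ 2 ^ (dk + 1) * 2 ^ s := Nat.mul_le_mul_right _ (by omega)
                  _ = 2 ^ (h + 1) := by rw [← pow_add]; congr 1; omega
            rw [hG1u, mul_zero, if_neg hnb]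
      _ = ((((k : ℕ) + 2) * 2 ^ s - ((k : ℕ) + 1) * 2 ^ s : ℕ) : ℝ) * l ^ s := by
          apply interval_count'
          · exact Nat.mul_pos (by omega) hpos
          · have : ((k : ℕ) + 2) * 2 ^ s ≤ 2 ^ (dk + 1) * 2 ^ s := by
              apply Nat.mul_le_mul_right
              omega
            calc ((k : ℕ) + 2) * 2 ^ s ≤ 2 ^ (dk + 1) * 2 ^ s := this
              _ = 2 ^ (h + 1) := by rw [← pow_add]; congr 1; omega
              _ = n + 1 := hnpow.symm
      _ = 2 ^ s * l ^ s := by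
          have he : ((k : ℕ) + 2) * 2 ^ s - ((k : ℕ) + 1) * 2 ^ s = 2 ^ s := by
            have e2 : ((k : ℕ) + 2) * 2 ^ s = ((k : ℕ) + 1) * 2 ^ s + 2 ^ s := by ring
            omega
          rw [he]
          push_cast
          ring
  -- quadratic form at the leaf vector
  have hquadv : v ⬝ᵥ (S *ᵥ v) = 2 ^ h * ∑ m ∈ Finset.range (h + 1), (2 * l ^ 2) ^ m := by
    have e1 : v ⬝ᵥ (S *ᵥ v) = (M *ᵥ v) ⬝ᵥ (M *ᵥ v) := by
      rw [hS', ← Matrix.mulVec_mulVec, Matrix.dotProduct_mulVec, Matrix.vecMul_transpose]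
    set G2 : ℕ → ℝ := fun d => ((2 : ℝ) ^ (h - d) * l ^ (h - d)) ^ 2 with hG2
    calc v ⬝ᵥ (S *ᵥ v)
        = (M *ᵥ v) ⬝ᵥ (M *ᵥ v) := e1
      _ = ∑ k : Fin n, G2 (Nat.log 2 ((k : ℕ) + 1)) := by
          simp only [dotProduct]
          apply Finset.sum_congr rfl
          intro k _
          rw [hMv k]
          simp only [hG2]
          ring
      _ = ∑ u ∈ Finset.Ico 1 (n + 1), G2 (Nat.log 2 u) :=
          sum_fin_eq_sum_Ico' n (fun u => G2 (Nat.log 2 u))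
      _ = ∑ d ∈ Finset.range (h + 1), 2 ^ d * G2 d := by
          rw [hnpow]
          exact depth_sum' h G2
      _ = ∑ j ∈ Finset.range (h + 1), 2 ^ (h + 1 - 1 - j) * G2 (h + 1 - 1 - j) :=
          (Finset.sum_range_reflect (fun d => 2 ^ d * G2 d) (h + 1)).symm
      _ = ∑ j ∈ Finset.range (h + 1), 2 ^ h * (2 * l ^ 2) ^ j := by
          apply Finset.sum_congr rfl
          intro j hj
          rw [Finset.mem_range] at hj
          rw [show h + 1 - 1 - j = h - j from by omega]
          simp only [hG2]
          rw [show h - (h - j) = j from by omega]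
          rw [pow_term' l (h - j) j, show h - j + j = h from by omega]
      _ = 2 ^ h * ∑ m ∈ Finset.range (h + 1), (2 * l ^ 2) ^ m := (Finset.mul_sum _ _ _).symm
  -- largest eigenvalue bound
  have hmaxge : (∑ k ∈ Finset.range (h + 1), (2 * l ^ 2) ^ k) ≤ ⨆ i, hS.eigenvalues i := by
    have hq := hup v
    rw [hquadv, hvv] at hq
    have h2h : (0 : ℝ) < 2 ^ h := by positivity
    rw [mul_comm (⨆ i, hS.eigenvalues i) ((2 : ℝ) ^ h)] at hq
    exact (mul_le_mul_iff_right₀ h2h).mp hq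
  -- conclusion
  have hSig0 : (0 : ℝ) ≤ ∑ k ∈ Finset.range (h + 1), (2 * l ^ 2) ^ k :=
    Finset.sum_nonneg (fun k _ => by positivity)
  have hmax0 : 0 ≤ ⨆ i, hS.eigenvalues i := le_trans hSig0 hmaxge
  refine ⟨hdiagbound, ?_, ?_⟩
  · refine le_trans hmaxge ?_
    rw [le_div_iff₀ hminpos]
    exact mul_le_of_le_one_right hmax0 hminle
  · exact Finset.single_le_sum (f := fun k => (2 * l ^ 2) ^ k)
      (fun k _ => by positivity) (Finset.self_mem_range_succ h)
end

section
/- Let b ∈ ℝ and let γ be the three-fold product of gaussianReal 0 1 on ℝ³, modeling noises (ε₁, ε₂, ε₃) of the model X = ε₁, Y = b·X + ε₂, Z = b·Y − b²·X + ε₃. Then the joint law of (X, Z), i.e. the pushforward of γ under (e₁, e₂, e₃) ↦ (e₁, b·e₂ + e₃), equals the product measure (gaussianReal 0 1) × (gaussianReal 0 (1+b²)); in particular X and Z are independent even though the DAG has the directed path X → Y → Z and the edge X → Z, so the strong faithfulness assumption fails due to path cancellation. -/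
open MeasureTheory ProbabilityTheory Real
open scoped NNReal ENNReal

lemma gaussianPDFReal_mul_eq {v₁ v₂ : ℝ≥0} (hv₁ : v₁ ≠ 0) (hv₂ : v₂ ≠ 0) (z x : ℝ) :
    gaussianPDFReal 0 v₁ x * gaussianPDFReal x v₂ z =
      gaussianPDFReal 0 (v₁ + v₂) z *
        gaussianPDFReal ((v₁ : ℝ) * z / ((v₁ : ℝ) + v₂)) (v₁ * v₂ / (v₁ + v₂)) x := by
  have h₁ : (0:ℝ) < v₁ := lt_of_le_of_ne v₁.coe_nonneg (by exact_mod_cast (Ne.symm hv₁))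
  have h₂ : (0:ℝ) < v₂ := lt_of_le_of_ne v₂.coe_nonneg (by exact_mod_cast (Ne.symm hv₂))
  have hW : (0:ℝ) < (v₁:ℝ) + v₂ := by linarith
  simp only [gaussianPDFReal, NNReal.coe_add, NNReal.coe_div, NNReal.coe_mul]
  rw [mul_mul_mul_comm, ← Real.exp_add, mul_mul_mul_comm, ← Real.exp_add]
  congr 1
  · rw [← mul_inv, ← mul_inv, ← Real.sqrt_mul (by positivity), ← Real.sqrt_mul (by positivity)]
    congr 1
    field_simp
  · congr 1
    field_simp
    ring

lemma gaussianPDF_mul_eq {v₁ v₂ : ℝ≥0} (hv₁ : v₁ ≠ 0) (hv₂ : v₂ ≠ 0) (z x : ℝ) :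
    gaussianPDF 0 v₁ x * gaussianPDF x v₂ z =
      gaussianPDF 0 (v₁ + v₂) z *
        gaussianPDF ((v₁ : ℝ) * z / ((v₁ : ℝ) + v₂)) (v₁ * v₂ / (v₁ + v₂)) x := by
  simp only [gaussianPDF, ← ENNReal.ofReal_mul (gaussianPDFReal_nonneg _ _ _)]
  rw [gaussianPDFReal_mul_eq hv₁ hv₂]

lemma measurable_gaussianPDF_pair (v : ℝ≥0) :
    Measurable fun p : ℝ × ℝ => gaussianPDF p.1 v p.2 := by
  simp only [gaussianPDF, gaussianPDFReal]
  fun_prop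

lemma gaussianReal_conv (v₁ : ℝ≥0) {v₂ : ℝ≥0} (hv₂ : v₂ ≠ 0) :
    Measure.map (fun q : ℝ × ℝ => q.1 + q.2)
        ((gaussianReal 0 v₁).prod (gaussianReal 0 v₂)) = gaussianReal 0 (v₁ + v₂) := by
  by_cases hv₁ : v₁ = 0
  · rw [hv₁, gaussianReal_zero_var, Measure.dirac_prod,
      Measure.map_map (by fun_prop) (by fun_prop)]
    simp [Function.comp_def]
  · have hW : v₁ + v₂ ≠ 0 := fun h => hv₁ (by simpa using (add_eq_zero.mp h).1)
    have hU : v₁ * v₂ / (v₁ + v₂) ≠ 0 := div_ne_zero (mul_ne_zero hv₁ hv₂) hW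
    ext s hs
    rw [Measure.map_apply (by fun_prop) hs,
      Measure.prod_apply ((by fun_prop : Measurable fun q : ℝ × ℝ => q.1 + q.2) hs)]
    have key : ∀ x : ℝ, gaussianReal 0 v₂ (Prod.mk x ⁻¹' ((fun q : ℝ × ℝ => q.1 + q.2) ⁻¹' s))
        = ∫⁻ z in s, gaussianPDF x v₂ z := by
      intro x
      have hpre : Prod.mk x ⁻¹' ((fun q : ℝ × ℝ => q.1 + q.2) ⁻¹' s) = (x + ·) ⁻¹' s := rfl
      rw [hpre, ← Measure.map_apply (measurable_const_add x) hs, gaussianReal_map_const_add,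
        zero_add, gaussianReal_of_var_ne_zero x hv₂, withDensity_apply _ hs]
    rw [lintegral_congr key, gaussianReal_of_var_ne_zero 0 hv₁,
      lintegral_withDensity_eq_lintegral_mul _ (measurable_gaussianPDF 0 v₁)
        ((measurable_gaussianPDF_pair v₂).lintegral_prod_right')]
    simp only [Pi.mul_apply]
    rw [lintegral_congr fun x => (lintegral_const_mul (gaussianPDF 0 v₁ x)
      (measurable_gaussianPDF x v₂)).symm]
    rw [lintegral_lintegral_swap
      (((measurable_gaussianPDF 0 v₁).comp measurable_fst).mul
        (measurable_gaussianPDF_pair v₂)).aemeasurable]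
    rw [gaussianReal_of_var_ne_zero 0 hW, withDensity_apply _ hs]
    refine setLIntegral_congr_fun hs (fun z hz => ?_)
    rw [lintegral_congr fun x => gaussianPDF_mul_eq hv₁ hv₂ z x,
      lintegral_const_mul _ (measurable_gaussianPDF _ _),
      lintegral_gaussianPDF_eq_one _ hU, mul_one]

/-- In the model `X = ε₁`, `Y = b·X + ε₂`, `Z = b·Y − b²·X + ε₃` with
i.i.d. standard Gaussian noises, the joint law of `(X, Z)` — the pushforward of the noise
law under `(e₁,e₂,e₃) ↦ (e₁, b·e₂ + e₃)` — is the product measure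
`N(0,1) × N(0, 1+b²)`: `X` and `Z` are independent despite the path `X → Y → Z` and the
edge `X → Z` (path cancellation; strong faithfulness fails). -/
theorem path_cancellation_independence (b : ℝ) :
    Measure.map (fun p : ℝ × ℝ × ℝ => (p.1, b * p.2.1 + p.2.2))
        ((gaussianReal 0 1).prod ((gaussianReal 0 1).prod (gaussianReal 0 1))) =
      (gaussianReal 0 1).prod (gaussianReal 0 (Real.toNNReal (1 + b ^ 2))) := by
  have h1 : (fun p : ℝ × ℝ × ℝ => (p.1, b * p.2.1 + p.2.2))
      = Prod.map id (fun q : ℝ × ℝ => b * q.1 + q.2) := rfl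
  rw [h1, ← Measure.map_prod_map _ _ measurable_id (by fun_prop), Measure.map_id]
  congr 1
  have h2 : (fun q : ℝ × ℝ => b * q.1 + q.2)
      = (fun q : ℝ × ℝ => q.1 + q.2) ∘ Prod.map (b * ·) id := rfl
  rw [h2, ← Measure.map_map (by fun_prop) (by fun_prop),
    ← Measure.map_prod_map _ _ (by fun_prop) measurable_id, Measure.map_id,
    gaussianReal_map_const_mul b, mul_zero, mul_one, gaussianReal_conv _ one_ne_zero]
  congr 1
  rw [← NNReal.coe_inj]
  push_cast
  rw [Real.coe_toNNReal _ (by positivity)]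
  ring
end
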